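/- arXiv:2512.19921 — 13 statements merged into one kernel-verified Lean document; each statement's English description precedes it below -/
import Mathlib

section
/- Let Σ be a finite discrete set, let x ∈ Σ^G, and let π : closure(O_G(x)) → H be a continuous G-equivariant map with π(x) = 1_H. For ξ ∈ H define Φ(ξ) = {a ∈ Σ : (ξ, a) ∈ closure({(τ(g), x(g)) : g ∈ G})}, the closure taken in the product space H × Σ. Then for every ξ ∈ H one has Φ(ξ) = {y(1_G) : y ∈ closure(O_G(x)) and π(y) = ξ}. -/
open Topology Set

/-- The shift action of `G` on `A^G`: `(g · x)(h) = x(h·g)`. -/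
def shift {G A : Type*} [Mul G] (g : G) (x : G → A) : G → A := fun h => x (h * g)

/-- The orbit `{g · x : g ∈ G}` of `x` under the shift action. -/
def shiftOrbit {G A : Type*} [Mul G] (x : G → A) : Set (G → A) :=
  Set.range fun g => shift g x

/-- For a finite discrete alphabet `S`, `x ∈ S^G` and a continuous
`G`-equivariant map `π` on the orbit closure of `x` with `π(x) = 1`, the set
`Φ(ξ) = {a : (ξ, a) ∈ closure {(τ(g), x(g)) : g ∈ G}}` coincides with
`{y(1_G) : y ∈ closure(O_G(x)), π(y) = ξ}` for every `ξ ∈ H`. -/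
theorem statement0
    {G : Type*} [Group G] [Countable G]
    {H : Type*} [Group H] [TopologicalSpace H] [IsTopologicalGroup H]
    [CompactSpace H] [TopologicalSpace.MetrizableSpace H]
    {S : Type*} [Fintype S] [TopologicalSpace S] [DiscreteTopology S]
    (τ : G →* H) (hτ_inj : Function.Injective τ) (hτ_dense : DenseRange τ)
    (x : G → S)
    (π : (G → S) → H)
    (hπ_cont : ContinuousOn π (closure (shiftOrbit x)))
    (hπ_equiv : ∀ g : G, ∀ y ∈ closure (shiftOrbit x), π (shift g y) = τ g * π y)
    (hπ_x : π x = 1)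
    (ξ : H) :
    {a : S | (ξ, a) ∈ closure {p : H × S | ∃ g : G, p = (τ g, x g)}}
      = {a : S | ∃ y ∈ closure (shiftOrbit x), π y = ξ ∧ y 1 = a} := by
  classical
  have hx_mem : x ∈ shiftOrbit x := ⟨1, by funext h; simp [shift]⟩
  have hx_cl : x ∈ closure (shiftOrbit x) := subset_closure hx_mem
  have hT2 : T2Space H := by infer_instance
  ext a
  simp only [mem_setOf_eq]
  constructor
  · intro hmem
    set f : G → H × S := fun g => (τ g, x g) with hf
    have hK : {p : H × S | ∃ g : G, p = (τ g, x g)} = Set.range f := by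
      ext p; constructor
      · rintro ⟨g, rfl⟩; exact ⟨g, rfl⟩
      · rintro ⟨g, rfl⟩; exact ⟨g, rfl⟩
    rw [hK] at hmem
    have hne : (Filter.comap f (𝓝 (ξ, a))).NeBot := by
      rw [Filter.comap_neBot_iff]
      intro U hU
      obtain ⟨p, hpU, g, rfl⟩ := mem_closure_iff_nhds.mp hmem U hU
      exact ⟨g, hpU⟩
    set V : Ultrafilter G := Ultrafilter.of (Filter.comap f (𝓝 (ξ, a))) with hV
    have hfV : Filter.Tendsto f V (𝓝 (ξ, a)) :=
      Filter.tendsto_iff_comap.mpr (Ultrafilter.of_le _)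
    set F : G → (G → S) := fun g => shift g x with hF
    obtain ⟨y, -, hyle⟩ := (isCompact_univ (X := G → S)).ultrafilter_le_nhds (V.map F)
      (by simp)
    have hFy : Filter.Tendsto F V (𝓝 y) := hyle
    have hy_cl : y ∈ closure (shiftOrbit x) :=
      mem_closure_of_tendsto hFy (Filter.Eventually.of_forall fun g => (show F g ∈ shiftOrbit x from ⟨g, rfl⟩))
    have hy1 : y 1 = a := by
      have h1 : Filter.Tendsto (fun g => F g 1) V (𝓝 (y 1)) :=
        ((continuous_apply (1 : G)).tendsto y).comp hFy
      have h2 : Filter.Tendsto (fun g => F g 1) V (𝓝 a) := by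
        have : (fun g => F g 1) = fun g => (f g).2 := by
          funext g; simp [hF, hf, shift]
        rw [this]
        exact (continuous_snd.tendsto _).comp hfV
      exact tendsto_nhds_unique h1 h2
    have hπy : π y = ξ := by
      have h1 : Filter.Tendsto (fun g => π (F g)) V (𝓝 (π y)) := by
        refine (hπ_cont y hy_cl).tendsto.comp ?_
        refine tendsto_nhdsWithin_iff.mpr ⟨hFy, Filter.Eventually.of_forall fun g => ?_⟩
        exact subset_closure (show F g ∈ shiftOrbit x from ⟨g, rfl⟩)
      have h2 : Filter.Tendsto (fun g => π (F g)) V (𝓝 ξ) := by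
        have : (fun g => π (F g)) = fun g => (f g).1 := by
          funext g
          simp [hF, hf, hπ_equiv g x hx_cl, hπ_x]
        rw [this]
        exact (continuous_fst.tendsto _).comp hfV
      exact tendsto_nhds_unique h1 h2
    exact ⟨y, hy_cl, hπy, hy1⟩
  · rintro ⟨y, hy, hπy, h1⟩
    have hF' : ContinuousOn (fun z : G → S => (π z, z 1)) (closure (shiftOrbit x)) :=
      hπ_cont.prodMk ((continuous_apply (1 : G)).continuousOn)
    have himg : (fun z : G → S => (π z, z 1)) '' (shiftOrbit x)
        ⊆ {p : H × S | ∃ g : G, p = (τ g, x g)} := by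
      rintro p ⟨z, ⟨g, rfl⟩, rfl⟩
      exact ⟨g, by simp [shift, hπ_equiv g x hx_cl, hπ_x]⟩
    have hsub : (fun z : G → S => (π z, z 1)) '' closure (shiftOrbit x)
        ⊆ closure {p : H × S | ∃ g : G, p = (τ g, x g)} :=
      hF'.image_closure.trans (closure_mono himg)
    have : ((ξ, a) : H × S) ∈ (fun z : G → S => (π z, z 1)) '' closure (shiftOrbit x) :=
      ⟨y, hy, by show (π y, y 1) = (ξ, a); rw [hπy, h1]⟩
    exact hsub this
end

section
/- Let W ⊆ H be a proper and irredundant window. Then there exists a unique continuous G-equivariant map β : closure(O_G(x_W)) → H with β(x_W) = 1_H. Moreover β is surjective and, for every x ∈ closure(O_G(x_W)) and ξ ∈ H, β(x) = ξ if and only if τ(G) ∩ interior(W)·ξ⁻¹ ⊆ {τ(g) : g ∈ G, x(g) = 1} ⊆ τ(G) ∩ W·ξ⁻¹. -/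
open Topology Set

open Classical in
/-- The model set `x_W ∈ {0,1}^G` associated to a window `W ⊆ H`:
`x_W(g) = 1 ⟺ τ(g) ∈ W`. -/
noncomputable def modelSet {G H : Type*} (τ : G → H) (W : Set H) : G → Bool :=
  fun g => if τ g ∈ W then true else false

open Filter

section Aux
variable {G : Type*} [Group G] {H : Type*} [Group H] [TopologicalSpace H] [IsTopologicalGroup H]

def Sset (τ : G →* H) (y : G → Bool) : Set H := {h : H | ∃ g : G, y g = true ∧ τ g = h}

def Psand (τ : G →* H) (W : Set H) (y : G → Bool) (ξ : H) : Prop :=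
  Set.range τ ∩ (fun w => w * ξ⁻¹) '' interior W ⊆ Sset τ y ∧
  Sset τ y ⊆ Set.range τ ∩ (fun w => w * ξ⁻¹) '' W

lemma mem_rimage {U : Set H} {ξ a : H} : a ∈ (fun w => w * ξ⁻¹) '' U ↔ a * ξ ∈ U := by
  constructor
  · rintro ⟨w, hw, rfl⟩; simpa using hw
  · intro h; exact ⟨a * ξ, h, by group⟩

lemma Psand_unique (τ : G →* H) (hτ_dense : DenseRange τ) {W : Set H}
    (h_proper : W = closure (interior W))
    (h_irred : ∀ ξ : H, (fun w => w * ξ) '' W = W → ξ = 1)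
    {y : G → Bool} {ξ₁ ξ₂ : H} (h1 : Psand τ W y ξ₁) (h2 : Psand τ W y ξ₂) : ξ₁ = ξ₂ := by
  have hWclosed : IsClosed W := h_proper ▸ isClosed_closure
  have key : ∀ ζ₁ ζ₂ : H, Psand τ W y ζ₁ → Psand τ W y ζ₂ →
      (fun w => w * ζ₁⁻¹) '' W ⊆ (fun w => w * ζ₂⁻¹) '' W := by
    intro ζ₁ ζ₂ p1 p2
    have hU : IsOpen ((fun w => w * ζ₁⁻¹) '' interior W) :=
      (Homeomorph.mulRight ζ₁⁻¹).isOpen_image.mpr isOpen_interior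
    have hC : IsClosed ((fun w => w * ζ₂⁻¹) '' W) :=
      (Homeomorph.mulRight ζ₂⁻¹).isClosed_image.mpr hWclosed
    have hsub : ((fun w => w * ζ₁⁻¹) '' interior W) ∩ Set.range τ
        ⊆ (fun w => w * ζ₂⁻¹) '' W := by
      rintro a ⟨ha, har⟩
      exact (p2.2 (p1.1 ⟨har, ha⟩)).2
    have h5 : (fun w => w * ζ₁⁻¹) '' interior W ⊆ closure ((fun w => w * ζ₂⁻¹) '' W) :=
      (hτ_dense.open_subset_closure_inter hU).trans (closure_mono hsub)
    calc (fun w => w * ζ₁⁻¹) '' W = (fun w => w * ζ₁⁻¹) '' closure (interior W) := by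
            rw [← h_proper]
      _ = closure ((fun w => w * ζ₁⁻¹) '' interior W) :=
            (Homeomorph.mulRight ζ₁⁻¹).image_closure _
      _ ⊆ closure (closure ((fun w => w * ζ₂⁻¹) '' W)) := closure_mono h5
      _ = (fun w => w * ζ₂⁻¹) '' W := by rw [closure_closure, hC.closure_eq]
  have heq : (fun w => w * ξ₁⁻¹) '' W = (fun w => w * ξ₂⁻¹) '' W :=
    (key _ _ h1 h2).antisymm (key _ _ h2 h1)
  have h1' : (fun w => w * ξ₁) '' ((fun w => w * ξ₂⁻¹) '' W)
      = (fun w => w * ξ₁) '' ((fun w => w * ξ₁⁻¹) '' W) := by rw [heq]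
  rw [Set.image_image, Set.image_image] at h1'
  have h2' : (fun w => w * (ξ₂⁻¹ * ξ₁)) '' W = W := by
    simpa [mul_assoc] using h1'
  have := h_irred _ h2'
  have : ξ₂ = ξ₁ := inv_mul_eq_one.mp this
  exact this.symm

lemma Psand_limit (τ : G →* H) (hτ_inj : Function.Injective τ) {W : Set H}
    (hWclosed : IsClosed W)
    {y : ℕ → G → Bool} {yl : G → Bool} {ξs : ℕ → H} {ξ : H}
    (hy : Tendsto y atTop (𝓝 yl)) (hξ : Tendsto ξs atTop (𝓝 ξ))
    (hP : ∀ᶠ n in atTop, Psand τ W (y n) (ξs n)) : Psand τ W yl ξ := by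
  have hpt : ∀ g : G, ∀ᶠ n in atTop, y n g = yl g := by
    intro g
    have h0 := tendsto_pi_nhds.mp hy g
    rw [nhds_discrete Bool] at h0
    exact tendsto_pure.mp h0
  constructor
  · rintro h ⟨⟨g, rfl⟩, himg⟩
    have hint : τ g * ξ ∈ interior W := mem_rimage.mp himg
    have hev : ∀ᶠ n in atTop, τ g * ξs n ∈ interior W :=
      (hξ.const_mul (τ g)).eventually (isOpen_interior.eventually_mem hint)
    obtain ⟨n, h1, h2, h3⟩ := ((hpt g).and (hev.and hP)).exists
    have hmem : τ g ∈ Sset τ (y n) := h3.1 ⟨⟨g, rfl⟩, mem_rimage.mpr h2⟩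
    obtain ⟨g', hg', hτg'⟩ := hmem
    have hgg : g' = g := hτ_inj hτg'
    subst hgg
    exact ⟨g', by rw [← h1, hg'], rfl⟩
  · rintro h ⟨g, hg, rfl⟩
    refine ⟨⟨g, rfl⟩, mem_rimage.mpr ?_⟩
    have hev : ∀ᶠ n in atTop, τ g * ξs n ∈ W := by
      filter_upwards [hpt g, hP] with n h1 h2
      have : τ g ∈ Sset τ (y n) := ⟨g, by rw [h1, hg], rfl⟩
      exact mem_rimage.mp (h2.2 this).2
    exact hWclosed.mem_of_tendsto (hξ.const_mul (τ g)) hev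

lemma Psand_shift (τ : G →* H) {W : Set H} {y : G → Bool} {ξ : H} (g : G)
    (h : Psand τ W y ξ) : Psand τ W (shift g y) (τ g * ξ) := by
  have hS : ∀ a : H, a ∈ Sset τ (shift g y) ↔ a * τ g ∈ Sset τ y := by
    intro a
    constructor
    · rintro ⟨g', hg', rfl⟩
      exact ⟨g' * g, hg', by rw [map_mul]⟩
    · rintro ⟨g'', hg'', hτ⟩
      refine ⟨g'' * g⁻¹, by simpa [shift] using hg'', ?_⟩
      rw [map_mul, map_inv, hτ]; group
  have hR : ∀ a : H, a ∈ Set.range τ ↔ a * τ g ∈ Set.range τ := by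
    intro a
    constructor
    · rintro ⟨b, rfl⟩; exact ⟨b * g, map_mul τ b g⟩
    · rintro ⟨b, hb⟩; exact ⟨b * g⁻¹, by rw [map_mul, map_inv, hb]; group⟩
  have hI : ∀ (U : Set H) (a : H),
      a ∈ (fun w => w * (τ g * ξ)⁻¹) '' U ↔ a * τ g ∈ (fun w => w * ξ⁻¹) '' U := by
    intro U a; rw [mem_rimage, mem_rimage, mul_assoc]
  constructor
  · rintro a ⟨har, haI⟩
    exact (hS a).mpr (h.1 ⟨(hR a).mp har, (hI _ a).mp haI⟩)
  · intro a ha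
    have h2 := h.2 ((hS a).mp ha)
    exact ⟨(hR a).mpr h2.1, (hI _ a).mpr h2.2⟩

lemma Psand_base (τ : G →* H) {W : Set H} : Psand τ W (modelSet ⇑τ W) 1 := by
  constructor
  · rintro h ⟨⟨g, rfl⟩, himg⟩
    have h1 : τ g ∈ interior W := by simpa using mem_rimage.mp himg
    exact ⟨g, by simp [modelSet, interior_subset h1], rfl⟩
  · rintro h ⟨g, hg, rfl⟩
    have h1 : τ g ∈ W := by
      by_contra hc
      simp [modelSet, hc] at hg
    exact ⟨⟨g, rfl⟩, mem_rimage.mpr (by simpa using h1)⟩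

lemma Psand_orbit (τ : G →* H) {W : Set H} (g : G) :
    Psand τ W (shift g (modelSet ⇑τ W)) (τ g) := by
  have := Psand_shift τ g (Psand_base (W := W) τ)
  rwa [mul_one] at this

open Classical in
noncomputable def betaMap (τ : G →* H) (W : Set H) (y : G → Bool) : H :=
  if h : ∃ ξ, Psand τ W y ξ then h.choose else 1

lemma betaMap_eq (τ : G →* H) (hτ_dense : DenseRange τ) {W : Set H}
    (h_proper : W = closure (interior W))
    (h_irred : ∀ ξ : H, (fun w => w * ξ) '' W = W → ξ = 1)
    {y : G → Bool} {ξ : H} (h : Psand τ W y ξ) : betaMap τ W y = ξ := by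
  rw [betaMap, dif_pos ⟨ξ, h⟩]
  exact Psand_unique τ hτ_dense h_proper h_irred (Exists.choose_spec (⟨ξ, h⟩ : ∃ ξ, Psand τ W y ξ)) h

end Aux

section Main
variable {G : Type*} [Group G] [Countable G]
  {H : Type*} [Group H] [TopologicalSpace H] [IsTopologicalGroup H]
  [CompactSpace H] [TopologicalSpace.MetrizableSpace H]

lemma Psand_exists (τ : G →* H) (hτ_inj : Function.Injective τ) {W : Set H}
    (hWclosed : IsClosed W) {y : G → Bool}
    (hy : y ∈ closure (shiftOrbit (modelSet (⇑τ) W))) : ∃ ξ, Psand τ W y ξ := by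
  obtain ⟨u, hu, hulim⟩ := mem_closure_iff_seq_limit.mp hy
  choose g hg using hu
  obtain ⟨ξ, -, φ, hφ, hconv⟩ :=
    isCompact_univ.tendsto_subseq (x := fun n => τ (g n)) (fun n => mem_univ _)
  refine ⟨ξ, Psand_limit τ hτ_inj hWclosed (y := fun n => u (φ n))
    (hulim.comp hφ.tendsto_atTop) hconv (Eventually.of_forall fun n => ?_)⟩
  show Psand τ W (u (φ n)) (τ (g (φ n)))
  rw [← hg (φ n)]
  exact Psand_orbit τ (g (φ n))
end Main

/-- For a proper and irredundant window `W ⊆ H` there is a unique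
continuous `G`-equivariant map `β` on the orbit closure of `x_W` with
`β(x_W) = 1`; moreover `β` is surjective and `β(x) = ξ` iff
`τ(G) ∩ int(W)·ξ⁻¹ ⊆ {τ(g) : x(g) = 1} ⊆ τ(G) ∩ W·ξ⁻¹`. -/
theorem statement1
    {G : Type*} [Group G] [Countable G]
    {H : Type*} [Group H] [TopologicalSpace H] [IsTopologicalGroup H]
    [CompactSpace H] [TopologicalSpace.MetrizableSpace H]
    (τ : G →* H) (hτ_inj : Function.Injective τ) (hτ_dense : DenseRange τ)
    (W : Set H)
    (h_proper : W = closure (interior W))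
    (h_irred : ∀ ξ : H, (fun w => w * ξ) '' W = W → ξ = 1) :
    ∃ β : (G → Bool) → H,
      (ContinuousOn β (closure (shiftOrbit (modelSet (⇑τ) W))) ∧
        (∀ g : G, ∀ y ∈ closure (shiftOrbit (modelSet (⇑τ) W)),
          β (shift g y) = τ g * β y) ∧
        β (modelSet (⇑τ) W) = 1) ∧
      (∀ β' : (G → Bool) → H,
        (ContinuousOn β' (closure (shiftOrbit (modelSet (⇑τ) W))) ∧
          (∀ g : G, ∀ y ∈ closure (shiftOrbit (modelSet (⇑τ) W)),
            β' (shift g y) = τ g * β' y) ∧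
          β' (modelSet (⇑τ) W) = 1) →
        Set.EqOn β' β (closure (shiftOrbit (modelSet (⇑τ) W)))) ∧
      (∀ ξ : H, ∃ y ∈ closure (shiftOrbit (modelSet (⇑τ) W)), β y = ξ) ∧
      (∀ y ∈ closure (shiftOrbit (modelSet (⇑τ) W)), ∀ ξ : H,
        β y = ξ ↔
          (Set.range τ ∩ (fun w => w * ξ⁻¹) '' interior W
              ⊆ {h : H | ∃ g : G, y g = true ∧ τ g = h} ∧
            {h : H | ∃ g : G, y g = true ∧ τ g = h}
              ⊆ Set.range τ ∩ (fun w => w * ξ⁻¹) '' W)) := by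
  classical
  set xW : G → Bool := modelSet (⇑τ) W with hxW
  set X : Set (G → Bool) := closure (shiftOrbit xW) with hX
  have hWclosed : IsClosed W := h_proper ▸ isClosed_closure
  set β : (G → Bool) → H := betaMap τ W with hβ
  have hbeq : ∀ {y : G → Bool} {ξ : H}, Psand τ W y ξ → β y = ξ :=
    fun h => betaMap_eq τ hτ_dense h_proper h_irred h
  have hbP : ∀ {y : G → Bool}, y ∈ X → Psand τ W y (β y) := by
    intro y hy
    obtain ⟨ξ, hξ⟩ := Psand_exists τ hτ_inj hWclosed hy
    rw [hbeq hξ]; exact hξ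
  -- equivariance
  have hequiv : ∀ g : G, ∀ y ∈ X, β (shift g y) = τ g * β y := by
    intro g y hy
    exact hbeq (Psand_shift τ g (hbP hy))
  -- normalization
  have hnorm : β xW = 1 := hbeq (Psand_base τ)
  -- continuity
  have hcont : ContinuousOn β X := by
    intro y hy
    show Filter.Tendsto β (𝓝[X] y) (𝓝 (β y))
    rw [tendsto_iff_seq_tendsto]
    intro u hu
    rw [tendsto_nhdsWithin_iff] at hu
    obtain ⟨hu1, hu2⟩ := hu
    apply Filter.tendsto_of_subseq_tendsto
    intro ns hns
    obtain ⟨ζ, -, ms, hms, hconv⟩ :=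
      isCompact_univ.tendsto_subseq (x := fun n => β (u (ns n))) (fun n => Set.mem_univ _)
    refine ⟨ms, ?_⟩
    have htot : Filter.Tendsto (fun n => ns (ms n)) Filter.atTop Filter.atTop :=
      hns.comp hms.tendsto_atTop
    have hP : ∀ᶠ n in Filter.atTop, Psand τ W (u (ns (ms n))) (β (u (ns (ms n)))) := by
      filter_upwards [htot.eventually hu2] with n hn
      exact hbP hn
    have hylim : Filter.Tendsto (fun n => u (ns (ms n))) Filter.atTop (𝓝 y) :=
      hu1.comp htot
    have hPyζ : Psand τ W y ζ := Psand_limit τ hτ_inj hWclosed hylim hconv hP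
    have hzeta : β y = ζ := hbeq hPyζ
    rw [hzeta]
    exact hconv
  have hxWmem : xW ∈ X := subset_closure ⟨1, funext fun h => by simp [shift]⟩
  refine ⟨β, ⟨hcont, hequiv, hnorm⟩, ?_, ?_, ?_⟩
  · -- uniqueness
    rintro β' ⟨hc', he', hn'⟩
    have horb : ∀ g : G, β' (shift g xW) = τ g ∧ β (shift g xW) = τ g := by
      intro g
      constructor
      · rw [he' g xW hxWmem, hn', mul_one]
      · exact hbeq (Psand_orbit τ g)
    have hdense : Dense {z : ↥X | (z : G → Bool) ∈ shiftOrbit xW} := by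
      intro z
      rw [closure_subtype]
      have himg : Subtype.val '' {z : ↥X | (z : G → Bool) ∈ shiftOrbit xW}
          = X ∩ shiftOrbit xW := Subtype.image_preimage_coe _ _
      rw [himg, Set.inter_eq_self_of_subset_right subset_closure]
      exact z.2
    have heqOn : Set.EqOn (X.restrict β') (X.restrict β)
        {z : ↥X | (z : G → Bool) ∈ shiftOrbit xW} := by
      rintro z ⟨g, hg⟩
      have h1 : shift g xW = (z : G → Bool) := hg
      show β' (z : G → Bool) = β (z : G → Bool)
      rw [← h1, (horb g).1, (horb g).2]
    have hfeq := Continuous.ext_on hdense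
      (continuousOn_iff_continuous_restrict.mp hc')
      (continuousOn_iff_continuous_restrict.mp hcont) heqOn
    intro y hy
    exact congrFun hfeq ⟨y, hy⟩
  · -- surjectivity
    intro ξ
    obtain ⟨u, hu, hul⟩ := mem_closure_iff_seq_limit.mp (hτ_dense ξ)
    choose g hg using hu
    obtain ⟨y, -, φ, hφ, hyl⟩ :=
      isCompact_univ.tendsto_subseq (x := fun n => shift (g n) xW) (fun n => Set.mem_univ _)
    have hyX : y ∈ X := by
      apply isClosed_closure.mem_of_tendsto hyl
      exact Filter.Eventually.of_forall fun n => subset_closure ⟨g (φ n), rfl⟩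
    have hξlim : Filter.Tendsto (fun n => τ (g (φ n))) Filter.atTop (𝓝 ξ) := by
      have h2 : (fun n => τ (g (φ n))) = u ∘ φ := funext fun n => hg (φ n)
      rw [h2]
      exact hul.comp hφ.tendsto_atTop
    have hPy : Psand τ W y ξ := Psand_limit τ hτ_inj hWclosed hyl hξlim
      (Filter.Eventually.of_forall fun n => Psand_orbit τ (g (φ n)))
    exact ⟨y, hyX, hbeq hPy⟩
  · -- characterization
    intro y hy ξ
    constructor
    · rintro rfl
      exact hbP hy
    · intro hP
      exact hbeq hP
end

section
/- Let W ⊆ H be a proper, irredundant and generic window, and let β : closure(O_G(x_W)) → H be a continuous G-equivariant map with β(x_W) = 1_H. Then β⁻¹({1_H}) = {x_W}; consequently for every g ∈ G the fiber β⁻¹({τ(g)}) equals {g·x_W}, so the set of points of closure(O_G(x_W)) whose β-fiber is a singleton is dense (β is almost one-to-one). -/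
open Topology Set

lemma shift_shift {G A : Type*} [Semigroup G] (g h : G) (x : G → A) :
    shift g (shift h x) = shift (g * h) x := by
  funext k; simp [shift, mul_assoc]

lemma shift_one {G A : Type*} [Monoid G] (x : G → A) : shift (1 : G) x = x := by
  funext k; simp [shift]

lemma continuous_shift {G A : Type*} [Mul G] [TopologicalSpace A] (g : G) :
    Continuous (shift g : (G → A) → (G → A)) :=
  continuous_pi fun h => continuous_apply (h * g)

/-- If `W` is a proper, irredundant and generic window and `β` is a
continuous `G`-equivariant map on the orbit closure of `x_W` with `β(x_W) = 1`,
then `β⁻¹({1}) = {x_W}`, every fiber over `τ(g)` is `{g·x_W}`, and the points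
with singleton fiber are dense (so `β` is almost one-to-one). -/
theorem statement2
    {G : Type*} [Group G] [Countable G]
    {H : Type*} [Group H] [TopologicalSpace H] [IsTopologicalGroup H]
    [CompactSpace H] [TopologicalSpace.MetrizableSpace H]
    (τ : G →* H) (hτ_inj : Function.Injective τ) (hτ_dense : DenseRange τ)
    (W : Set H)
    (h_proper : W = closure (interior W))
    (h_irred : ∀ ξ : H, (fun w => w * ξ) '' W = W → ξ = 1)
    (h_generic : frontier W ∩ Set.range τ = ∅)
    (β : (G → Bool) → H)
    (hβ_cont : ContinuousOn β (closure (shiftOrbit (modelSet (⇑τ) W))))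
    (hβ_equiv : ∀ g : G, ∀ y ∈ closure (shiftOrbit (modelSet (⇑τ) W)),
      β (shift g y) = τ g * β y)
    (hβ_one : β (modelSet (⇑τ) W) = 1) :
    {y ∈ closure (shiftOrbit (modelSet (⇑τ) W)) | β y = 1} = {modelSet (⇑τ) W} ∧
    (∀ g : G,
      {y ∈ closure (shiftOrbit (modelSet (⇑τ) W)) | β y = τ g}
        = {shift g (modelSet (⇑τ) W)}) ∧
    closure (shiftOrbit (modelSet (⇑τ) W)) ⊆
      closure {y ∈ closure (shiftOrbit (modelSet (⇑τ) W)) |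
        {z ∈ closure (shiftOrbit (modelSet (⇑τ) W)) | β z = β y} = {y}} := by
  set xW := modelSet (⇑τ) W with hxW
  set X := closure (shiftOrbit xW) with hX
  have hWclosed : IsClosed W := by rw [h_proper]; exact isClosed_closure
  have hgen : ∀ g : G, τ g ∉ frontier W := by
    intro g hg
    have : τ g ∈ frontier W ∩ Set.range ⇑τ := ⟨hg, g, rfl⟩
    simp [h_generic] at this
  have hxW_mem : xW ∈ X := subset_closure ⟨1, shift_one xW⟩
  have hshift_mem : ∀ g : G, shift g xW ∈ X := fun g => subset_closure ⟨g, rfl⟩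
  have hX_inv : ∀ g : G, ∀ y ∈ X, shift g y ∈ X := by
    intro g y hy
    refine map_mem_closure (continuous_shift g) hy ?_
    rintro z ⟨h, rfl⟩
    exact ⟨g * h, (shift_shift g h xW).symm⟩
  have key : ∀ y ∈ X, β y = 1 → y = xW := by
    intro y hy hβy
    obtain ⟨u, hu_mem, hu_lim⟩ := mem_closure_iff_seq_limit.mp hy
    choose g hg using hu_mem
    have huX : ∀ n, u n ∈ X := fun n => hg n ▸ hshift_mem (g n)
    have hτg : Filter.Tendsto (fun n => τ (g n)) Filter.atTop (𝓝 1) := by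
      have h1 : Filter.Tendsto (fun n => β (u n)) Filter.atTop (𝓝 (β y)) := by
        refine ((hβ_cont y hy).tendsto).comp ?_
        exact tendsto_nhdsWithin_of_tendsto_nhds_of_eventually_within u hu_lim
          (Filter.Eventually.of_forall huX)
      have h2 : ∀ n, β (u n) = τ (g n) := by
        intro n
        rw [← hg n, hβ_equiv (g n) xW hxW_mem, hβ_one, mul_one]
      rw [hβy] at h1
      simp only [h2] at h1
      exact h1
    have hτhg : ∀ h : G, Filter.Tendsto (fun n => τ (h * g n)) Filter.atTop (𝓝 (τ h)) := by
      intro h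
      have := (tendsto_const_nhds (x := τ h) (f := Filter.atTop (α := ℕ))).mul hτg
      simpa [map_mul] using this
    funext h
    have hcoord : Filter.Tendsto (fun n => u n h) Filter.atTop (𝓝 (y h)) :=
      tendsto_pi_nhds.mp hu_lim h
    have heq : ∀ᶠ n in Filter.atTop, u n h = y h :=
      hcoord.eventually (IsOpen.mem_nhds (isOpen_discrete {y h}) rfl)
    have htrue' : ∀ n, τ (h * g n) ∈ W → u n h = true := by
      intro n hn
      rw [← hg n]
      simp only [shift, hxW, modelSet]
      rw [if_pos hn]
    have hfalse' : ∀ n, τ (h * g n) ∉ W → u n h = false := by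
      intro n hn
      rw [← hg n]
      simp only [shift, hxW, modelSet]
      rw [if_neg hn]
    by_cases hmem : τ h ∈ W
    · have hint : τ h ∈ interior W := by
        have hfr := hgen h
        rw [hWclosed.frontier_eq] at hfr
        by_contra hni
        exact hfr ⟨hmem, hni⟩
      have hev : ∀ᶠ n in Filter.atTop, τ (h * g n) ∈ interior W :=
        (hτhg h).eventually (isOpen_interior.mem_nhds hint)
      have htrue : ∀ᶠ n in Filter.atTop, u n h = true :=
        hev.mono fun n hn => htrue' n (interior_subset hn)
      obtain ⟨n, h1, h2⟩ := (heq.and htrue).exists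
      have hyh : y h = true := by rw [← h1, h2]
      rw [hyh]
      simp [hxW, modelSet, hmem]
    · have hev : ∀ᶠ n in Filter.atTop, τ (h * g n) ∈ Wᶜ :=
        (hτhg h).eventually (IsOpen.mem_nhds hWclosed.isOpen_compl hmem)
      have hfalse : ∀ᶠ n in Filter.atTop, u n h = false :=
        hev.mono fun n hn => hfalse' n hn
      obtain ⟨n, h1, h2⟩ := (heq.and hfalse).exists
      have hyh : y h = false := by rw [← h1, h2]
      rw [hyh]
      simp [hxW, modelSet, hmem]
  have part2 : ∀ g : G, {y ∈ X | β y = τ g} = {shift g xW} := by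
    intro g
    ext y
    simp only [mem_sep_iff, mem_singleton_iff]
    constructor
    · rintro ⟨hy, hb⟩
      have hz : shift g⁻¹ y ∈ X := hX_inv g⁻¹ y hy
      have hbz : β (shift g⁻¹ y) = 1 := by
        rw [hβ_equiv g⁻¹ y hy, hb, ← map_mul, inv_mul_cancel, map_one]
      have h0 := key _ hz hbz
      have h1 : shift g (shift g⁻¹ y) = shift g xW := by rw [h0]
      rwa [shift_shift, mul_inv_cancel, shift_one] at h1
    · rintro rfl
      exact ⟨hshift_mem g, by rw [hβ_equiv g xW hxW_mem, hβ_one, mul_one]⟩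
  refine ⟨?_, part2, ?_⟩
  · ext y
    simp only [mem_sep_iff, mem_singleton_iff]
    constructor
    · rintro ⟨hy, hb⟩
      exact key y hy hb
    · rintro rfl
      exact ⟨hxW_mem, hβ_one⟩
  · have horb : shiftOrbit xW ⊆ {y ∈ X | {z ∈ X | β z = β y} = {y}} := by
      rintro y ⟨g, rfl⟩
      refine ⟨hshift_mem g, ?_⟩
      have hby : β (shift g xW) = τ g := by
        rw [hβ_equiv g xW hxW_mem, hβ_one, mul_one]
      rw [hby]
      exact part2 g
    exact closure_mono horb
end

section
/- Assume G is nontrivial. Let x ∈ {0,1}^G and suppose β : closure(O_G(x)) → H is a continuous surjective G-equivariant map with β⁻¹({1_H}) = {x}. Let W = {ξ ∈ H : there exists y ∈ closure(O_G(x)) with β(y) = ξ and y(1_G) = 1}. Then frontier(W) = {ξ ∈ H : there exist y, y' ∈ closure(O_G(x)) with β(y) = β(y') = ξ and y(1_G) ≠ y'(1_G)}; equivalently, frontier(W) = W \ {ξ ∈ H : every y ∈ closure(O_G(x)) with β(y) = ξ has y(1_G) = 1}. -/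
open Topology Set

/-- In the setting of STATEMENT 4, the frontier of the window
`W = {ξ : ∃ y ∈ closure(O_G(x)), β(y) = ξ and y(1) = 1}` is the set of `ξ`
over which the fiber carries both symbols at `1_G`; equivalently it is
`W` minus the set of `ξ` whose whole fiber carries the symbol `1` at `1_G`. -/
theorem statement5
    {G : Type*} [Group G] [Countable G] [Nontrivial G]
    {H : Type*} [Group H] [TopologicalSpace H] [IsTopologicalGroup H]
    [CompactSpace H] [TopologicalSpace.MetrizableSpace H]
    (τ : G →* H) (hτ_inj : Function.Injective τ) (hτ_dense : DenseRange τ)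
    (x : G → Bool)
    (β : (G → Bool) → H)
    (hβ_cont : ContinuousOn β (closure (shiftOrbit x)))
    (hβ_equiv : ∀ g : G, ∀ y ∈ closure (shiftOrbit x), β (shift g y) = τ g * β y)
    (hβ_surj : ∀ ξ : H, ∃ y ∈ closure (shiftOrbit x), β y = ξ)
    (hβ_fiber : {y ∈ closure (shiftOrbit x) | β y = 1} = {x})
    (W : Set H)
    (hW : W = {ξ : H | ∃ y ∈ closure (shiftOrbit x), β y = ξ ∧ y 1 = true}) :
    frontier W = {ξ : H | ∃ y ∈ closure (shiftOrbit x), ∃ y' ∈ closure (shiftOrbit x),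
        β y = ξ ∧ β y' = ξ ∧ y 1 ≠ y' 1} ∧
    frontier W = W \ {ξ : H | ∀ y ∈ closure (shiftOrbit x), β y = ξ → y 1 = true} := by
  set X := closure (shiftOrbit x) with hXdef
  have hXclosed : IsClosed X := isClosed_closure
  have hXcompact : IsCompact X := hXclosed.isCompact
  have hx : x ∈ X ∧ β x = 1 := by
    have : x ∈ {y ∈ X | β y = 1} := by rw [hβ_fiber]; rfl
    exact this
  have shift_shift : ∀ (g h : G) (z : G → Bool), shift g (shift h z) = shift (g * h) z := by
    intro g h z; funext k; simp [shift, mul_assoc]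
  have shift_one : ∀ z : G → Bool, shift (1 : G) z = z := by
    intro z; funext k; simp [shift]
  have shift_cont : ∀ g : G, Continuous (shift (A := Bool) g) :=
    fun g => continuous_pi fun h => continuous_apply _
  have shift_mem : ∀ g : G, ∀ z ∈ X, shift g z ∈ X := by
    intro g z hz
    refine map_mem_closure (shift_cont g) hz ?_
    rintro w ⟨h, rfl⟩
    exact ⟨g * h, (shift_shift g h x).symm⟩
  have hβshift : ∀ g : G, β (shift g x) = τ g := by
    intro g; rw [hβ_equiv g x hx.1, hx.2, mul_one]
  have fiber_sing : ∀ g : G, ∀ z ∈ X, β z = τ g → z = shift g x := by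
    intro g z hz hβz
    have h1 : β (shift g⁻¹ z) = 1 := by
      rw [hβ_equiv g⁻¹ z hz, hβz, map_inv, inv_mul_cancel]
    have h2 : shift g⁻¹ z ∈ ({x} : Set (G → Bool)) := by
      rw [← hβ_fiber]; exact ⟨shift_mem g⁻¹ z hz, h1⟩
    have h3 : shift g⁻¹ z = x := h2
    calc z = shift (1 : G) z := (shift_one z).symm
    _ = shift g (shift g⁻¹ z) := by rw [shift_shift, mul_inv_cancel]
    _ = shift g x := by rw [h3]
  have shift_at_one : ∀ g : G, (shift g x) 1 = x g := by
    intro g; simp [shift]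
  -- the "false" window
  set W0 : Set H := {ξ : H | ∃ y ∈ X, β y = ξ ∧ y 1 = false} with hW0def
  have hWmem : ∀ ξ, ξ ∈ W ↔ ∃ y ∈ X, β y = ξ ∧ y 1 = true := by
    intro ξ; rw [hW]; rfl
  -- key density lemma: W0 ⊆ closure Wᶜ
  have hA : W0 ⊆ closure Wᶜ := by
    rintro ξ ⟨y, hyX, hβy, hy1⟩
    rw [mem_closure_iff]
    intro U hU hξU
    have hβyU : β y ∈ U := by rw [hβy]; exact hξU
    have h1 : β ⁻¹' U ∈ 𝓝[X] y := (hβ_cont y hyX) (hU.mem_nhds hβyU)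
    have hopen : IsOpen {z : G → Bool | z 1 = false} := by
      have hc : Continuous fun z : G → Bool => z 1 := continuous_apply (1 : G)
      have h := hc.isOpen_preimage ({false} : Set Bool)
        (isOpen_discrete ({false} : Set Bool))
      exact h
    have h2 : {z : G → Bool | z 1 = false} ∈ 𝓝[X] y :=
      mem_nhdsWithin_of_mem_nhds (hopen.mem_nhds hy1)
    have h3 : (β ⁻¹' U ∩ {z : G → Bool | z 1 = false}) ∈ 𝓝[shiftOrbit x] y :=
      nhdsWithin_mono y subset_closure (Filter.inter_mem h1 h2)
    have hne : (𝓝[shiftOrbit x] y).NeBot := mem_closure_iff_nhdsWithin_neBot.mp hyX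
    obtain ⟨z, ⟨hzU, hz1⟩, hzO⟩ :=
      Filter.nonempty_of_mem (Filter.inter_mem h3 self_mem_nhdsWithin)
    obtain ⟨g, rfl⟩ := hzO
    refine ⟨τ g, ⟨by rwa [← hβshift g], ?_⟩⟩
    intro hτgW
    obtain ⟨z', hz'X, hβz', hz'1⟩ := (hWmem _).mp hτgW
    have heq := fiber_sing g z' hz'X hβz'
    rw [heq] at hz'1
    simp only [Set.mem_setOf_eq] at hz1
    exact Bool.noConfusion (hz'1.symm.trans hz1)
  -- closedness of W and W0
  have hclosed_true : IsClosed {z : G → Bool | z 1 = true} := by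
    have hc : Continuous fun z : G → Bool => z 1 := continuous_apply (1 : G)
    have h := IsClosed.preimage hc (isClosed_discrete ({true} : Set Bool))
    exact h
  have hclosed_false : IsClosed {z : G → Bool | z 1 = false} := by
    have hc : Continuous fun z : G → Bool => z 1 := continuous_apply (1 : G)
    have h := IsClosed.preimage hc (isClosed_discrete ({false} : Set Bool))
    exact h
  have himgW : W = β '' (X ∩ {z | z 1 = true}) := by
    ext ξ
    rw [hWmem]
    constructor
    · rintro ⟨y, hyX, hβy, hy1⟩; exact ⟨y, ⟨hyX, hy1⟩, hβy⟩
    · rintro ⟨y, ⟨hyX, hy1⟩, hβy⟩; exact ⟨y, hyX, hβy, hy1⟩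
  have himgW0 : W0 = β '' (X ∩ {z | z 1 = false}) := by
    ext ξ
    constructor
    · rintro ⟨y, hyX, hβy, hy1⟩; exact ⟨y, ⟨hyX, hy1⟩, hβy⟩
    · rintro ⟨y, ⟨hyX, hy1⟩, hβy⟩; exact ⟨y, hyX, hβy, hy1⟩
  have hWclosed : IsClosed W := by
    rw [himgW]
    exact ((hXcompact.inter_right hclosed_true).image_of_continuousOn
      (hβ_cont.mono inter_subset_left)).isClosed
  have hW0closed : IsClosed W0 := by
    rw [himgW0]
    exact ((hXcompact.inter_right hclosed_false).image_of_continuousOn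
      (hβ_cont.mono inter_subset_left)).isClosed
  -- interior of W
  have hcompl : W0ᶜ ⊆ W := by
    intro ξ hξ
    obtain ⟨y, hyX, hβy⟩ := hβ_surj ξ
    rw [hWmem]
    refine ⟨y, hyX, hβy, ?_⟩
    cases h : y 1 with
    | false => exact absurd ⟨y, hyX, hβy, h⟩ hξ
    | true => rfl
  have hint : interior W = W0ᶜ := by
    apply subset_antisymm
    · intro ξ hξ
      intro hξ0
      have hcl := hA hξ0
      rw [mem_closure_iff] at hcl
      obtain ⟨η, hη1, hη2⟩ := hcl (interior W) isOpen_interior hξ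
      exact hη2 (interior_subset hη1)
    · exact interior_maximal hcompl hW0closed.isOpen_compl
  have hfront : frontier W = W ∩ W0 := by
    rw [hWclosed.frontier_eq, hint, diff_compl]
  constructor
  · rw [hfront]
    ext ξ
    constructor
    · rintro ⟨hξW, hξ0⟩
      obtain ⟨y, hyX, hβy, hy1⟩ := (hWmem _).mp hξW
      obtain ⟨y', hy'X, hβy', hy'1⟩ := hξ0
      exact ⟨y, hyX, y', hy'X, hβy, hβy', by rw [hy1, hy'1]; exact fun h => Bool.noConfusion h⟩
    · rintro ⟨y, hyX, y', hy'X, hβy, hβy', hne⟩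
      cases h : y 1 with
      | true =>
        have h' : y' 1 = false := by
          cases h' : y' 1 with
          | false => rfl
          | true => rw [h, h'] at hne; exact absurd rfl hne
        exact ⟨(hWmem _).mpr ⟨y, hyX, hβy, h⟩, ⟨y', hy'X, hβy', h'⟩⟩
      | false =>
        have h' : y' 1 = true := by
          cases h' : y' 1 with
          | true => rfl
          | false => rw [h, h'] at hne; exact absurd rfl hne
        exact ⟨(hWmem _).mpr ⟨y', hy'X, hβy', h'⟩, ⟨y, hyX, hβy, h⟩⟩
  · rw [hfront]
    ext ξ
    constructor
    · rintro ⟨hξW, hξ0⟩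
      refine ⟨hξW, fun hall => ?_⟩
      obtain ⟨y, hyX, hβy, hy1⟩ := hξ0
      exact Bool.noConfusion ((hall y hyX hβy).symm.trans hy1)
    · rintro ⟨hξW, hnall⟩
      refine ⟨hξW, ?_⟩
      simp only [Set.mem_setOf_eq] at hnall
      push_neg at hnall
      obtain ⟨y, hyX, hβy, hy1⟩ := hnall
      refine ⟨y, hyX, hβy, ?_⟩
      cases h : y 1 with
      | false => rfl
      | true => exact absurd h hy1
end

section
/- Let W ⊆ H be a proper, irredundant window, let ξ ∈ H, and let x ∈ {0,1}^G satisfy τ(G) ∩ interior(W)·ξ⁻¹ ⊆ {τ(g) : g ∈ G, x(g) = 1} ⊆ τ(G) ∩ W·ξ⁻¹. Then x ∈ closure(O_G(x_W)) if and only if for all finite sets N ⊆ {g ∈ G : x(g) = 1} and M ⊆ {g ∈ G : x(g) = 0} one has ξ ∈ closure(T_W(N, M) ∩ τ(G)). -/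
open Topology Set

/-- `T_W(N, M) = (⋂_{l ∈ N} τ(l)⁻¹·W) \ (⋃_{j ∈ M} τ(j)⁻¹·W)`. -/
def TW {G H : Type*} [Group H] (τ : G → H) (W : Set H) (N M : Finset G) : Set H :=
  (⋂ l ∈ N, (fun w => (τ l)⁻¹ * w) '' W) \ (⋃ j ∈ M, (fun w => (τ j)⁻¹ * w) '' W)

section Aux

variable {G H : Type*} [Group H]

lemma image_mulRightInv_eq (W : Set H) (a : H) :
    (fun w => w * a⁻¹) '' W = {h | h * a ∈ W} := by
  ext h
  constructor
  · rintro ⟨w, hw, rfl⟩; simpa [mul_assoc] using hw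
  · intro hh; exact ⟨h * a, hh, by group⟩

lemma image_mulLeftInv_eq (W : Set H) (a : H) :
    (fun w => a⁻¹ * w) '' W = {h | a * h ∈ W} := by
  ext h
  constructor
  · rintro ⟨w, hw, rfl⟩; simpa [← mul_assoc] using hw
  · intro hh; exact ⟨a * h, hh, by group⟩

lemma mem_TW {τ : G → H} {W : Set H} {N M : Finset G} {h : H} :
    h ∈ TW τ W N M ↔ (∀ l ∈ N, τ l * h ∈ W) ∧ (∀ j ∈ M, τ j * h ∉ W) := by
  simp only [TW, Set.mem_diff, Set.mem_iInter, Set.mem_iUnion, image_mulLeftInv_eq,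
    Set.mem_setOf_eq]
  push_neg
  tauto

lemma modelSet_true_iff (τ : G → H) (W : Set H) (g : G) :
    modelSet τ W g = true ↔ τ g ∈ W := by
  by_cases h : τ g ∈ W <;> simp [modelSet, h]

lemma modelSet_false_iff (τ : G → H) (W : Set H) (g : G) :
    modelSet τ W g = false ↔ τ g ∉ W := by
  by_cases h : τ g ∈ W <;> simp [modelSet, h]

variable [TopologicalSpace H] [IsTopologicalGroup H]

lemma image_mul_closure (s : Set H) (a : H) :
    (fun w => w * a) '' closure s = closure ((fun w => w * a) '' s) := by
  simpa [Homeomorph.coe_mulRight] using (Homeomorph.mulRight a).image_closure s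

/-- If `x` (encoded by the set `S` of its "ones") is squeezed both by `ξ` and `η`,
then `ξ = η`. -/
lemma unique_param (τ : G → H) (hτ_dense : DenseRange τ) (W : Set H)
    (h_proper : W = closure (interior W))
    (h_irred : ∀ ζ : H, (fun w => w * ζ) '' W = W → ζ = 1)
    (S : Set H) (ξ η : H)
    (hξ1 : Set.range τ ∩ {h | h * ξ ∈ interior W} ⊆ S)
    (hξ2 : S ⊆ {h | h * ξ ∈ W})
    (hη1 : Set.range τ ∩ {h | h * η ∈ interior W} ⊆ S)
    (hη2 : S ⊆ {h | h * η ∈ W}) : ξ = η := by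
  have hWc : IsClosed W := by rw [h_proper]; exact isClosed_closure
  have key : ∀ ζ : H, (Set.range τ ∩ {h | h * ζ ∈ interior W} ⊆ S) →
      (S ⊆ {h | h * ζ ∈ W}) → closure ((fun h => h * ζ) '' S) = W := by
    intro ζ h1 h2
    apply subset_antisymm
    · apply closure_minimal _ hWc
      rintro _ ⟨s, hs, rfl⟩
      exact h2 hs
    · have hsub : interior W ⊆ closure ((fun h => h * ζ) '' S) := by
        intro w hw
        rw [mem_closure_iff]
        intro U hU hwU
        have hopen : IsOpen ((fun h => h * ζ⁻¹) '' (U ∩ interior W)) := by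
          simpa [Homeomorph.coe_mulRight] using
            ((Homeomorph.mulRight ζ⁻¹).isOpenMap _ (hU.inter isOpen_interior))
        have hne : ((fun h => h * ζ⁻¹) '' (U ∩ interior W)).Nonempty :=
          ⟨w * ζ⁻¹, ⟨w, ⟨hwU, hw⟩, rfl⟩⟩
        obtain ⟨g, u, ⟨huU, huW⟩, hgu⟩ := hτ_dense.exists_mem_open hopen hne
        have hgζ : τ g * ζ = u := by rw [← hgu]; group
        have hτg : τ g ∈ S := h1 ⟨⟨g, rfl⟩, by
          simp only [Set.mem_setOf_eq, hgζ]; exact huW⟩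
        exact ⟨u, huU, τ g, hτg, hgζ⟩
      rw [h_proper]
      exact closure_minimal hsub isClosed_closure
  have hWη := key η hη1 hη2
  have hWξ := key ξ hξ1 hξ2
  have himg : (fun w => w * (η⁻¹ * ξ)) '' W = W := by
    conv_lhs => rw [← hWη]
    rw [image_mul_closure]
    simp only [Set.image_image]
    have hfe : (fun h : H => h * η * (η⁻¹ * ξ)) = fun h => h * ξ := by
      funext h; rw [mul_assoc, mul_inv_cancel_left]
    rw [hfe, hWξ]
  exact (inv_mul_eq_one.mp (h_irred _ himg)).symm

end Aux

/-- For a proper irredundant window `W`, `ξ ∈ H` and `x ∈ {0,1}^G`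
squeezed between `τ(G) ∩ int(W)ξ⁻¹` and `τ(G) ∩ Wξ⁻¹`, one has
`x ∈ closure(O_G(x_W))` iff for all finite `N ⊆ {x = 1}` and `M ⊆ {x = 0}`,
`ξ ∈ closure(T_W(N,M) ∩ τ(G))`. -/
theorem statement6
    {G : Type*} [Group G] [Countable G]
    {H : Type*} [Group H] [TopologicalSpace H] [IsTopologicalGroup H]
    [CompactSpace H] [TopologicalSpace.MetrizableSpace H]
    (τ : G →* H) (hτ_inj : Function.Injective τ) (hτ_dense : DenseRange τ)
    (W : Set H)
    (h_proper : W = closure (interior W))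
    (h_irred : ∀ ξ : H, (fun w => w * ξ) '' W = W → ξ = 1)
    (ξ : H) (x : G → Bool)
    (hx_lower : Set.range τ ∩ (fun w => w * ξ⁻¹) '' interior W
      ⊆ {h : H | ∃ g : G, x g = true ∧ τ g = h})
    (hx_upper : {h : H | ∃ g : G, x g = true ∧ τ g = h}
      ⊆ Set.range τ ∩ (fun w => w * ξ⁻¹) '' W) :
    x ∈ closure (shiftOrbit (modelSet (⇑τ) W)) ↔
      ∀ N M : Finset G, (∀ g ∈ N, x g = true) → (∀ g ∈ M, x g = false) →
        ξ ∈ closure (TW (⇑τ) W N M ∩ Set.range τ) := by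
  classical
  set S : Set H := {h : H | ∃ g : G, x g = true ∧ τ g = h} with hS
  have hWc : IsClosed W := by rw [h_proper]; exact isClosed_closure
  constructor
  · -- forward direction
    intro hcl N M hN hM
    -- the agreement sets
    set A : Finset G → Set G :=
      fun F => {g | ∀ f ∈ F, modelSet (⇑τ) W (f * g) = x f} with hA
    have hA_ne : ∀ F : Finset G, (A F).Nonempty := by
      intro F
      have hP : Set.pi (↑F : Set G) (fun f => ({x f} : Set Bool)) ∈ 𝓝 x := by
        rw [nhds_pi]
        exact Filter.mem_pi.mpr ⟨↑F, F.finite_toSet, fun f => {x f},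
          fun f => IsOpen.mem_nhds (isOpen_discrete _) rfl, subset_rfl⟩
      obtain ⟨y, hyP, g, rfl⟩ := mem_closure_iff_nhds.mp hcl _ hP
      exact ⟨g, fun f hf => hyP f hf⟩
    have hdir : Directed (· ≥ ·) fun F : Finset G => Filter.principal (A F) := by
      intro F F'
      exact ⟨F ∪ F',
        Filter.principal_mono.mpr (fun g hg f hf => hg f (Finset.mem_union_left _ hf)),
        Filter.principal_mono.mpr (fun g hg f hf => hg f (Finset.mem_union_right _ hf))⟩
    have hne : (⨅ F : Finset G, Filter.principal (A F)).NeBot :=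
      Filter.iInf_neBot_of_directed hdir
        (fun F => Filter.principal_neBot_iff.mpr (hA_ne F))
    let 𝒰 : Ultrafilter G := @Ultrafilter.of G _ hne
    have h𝒰A : ∀ F : Finset G, A F ∈ 𝒰 := fun F =>
      Ultrafilter.of_le _ (Filter.mem_iInf_of_mem F (Filter.mem_principal_self _))
    obtain ⟨η, -, hη⟩ := isCompact_univ.ultrafilter_le_nhds (𝒰.map (⇑τ))
      (Filter.le_principal_iff.mpr Filter.univ_mem)
    have hpair : ∀ (f : G) (V : Set H), V ∈ 𝓝 η →
        ∃ g : G, τ g ∈ V ∧ modelSet (⇑τ) W (f * g) = x f := by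
      intro f V hV
      have h1 : (⇑τ) ⁻¹' V ∈ 𝒰 := by
        have := hη hV
        rwa [Ultrafilter.mem_coe, Ultrafilter.mem_map] at this
      obtain ⟨g, hg1, hg2⟩ := Filter.nonempty_of_mem (Filter.inter_mem h1 (h𝒰A {f}))
      exact ⟨g, hg1, hg2 f (Finset.mem_singleton_self f)⟩
    have hupper_η : S ⊆ {h | h * η ∈ W} := by
      rintro _ ⟨f, hxf, rfl⟩
      by_contra hnot
      have hV : {h | τ f * h ∈ Wᶜ} ∈ 𝓝 η :=
        (hWc.isOpen_compl.preimage (continuous_mul_left (τ f))).mem_nhds hnot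
      obtain ⟨g, hgV, hgA⟩ := hpair f _ hV
      have hmem : τ (f * g) ∈ W := (modelSet_true_iff _ _ _).mp (hgA.trans hxf)
      rw [map_mul] at hmem
      exact hgV hmem
    have hlower_η : Set.range (⇑τ) ∩ {h | h * η ∈ interior W} ⊆ S := by
      rintro _ ⟨⟨f, rfl⟩, hmem⟩
      have hV : {h | τ f * h ∈ interior W} ∈ 𝓝 η :=
        (isOpen_interior.preimage (continuous_mul_left (τ f))).mem_nhds hmem
      obtain ⟨g, hgV, hgA⟩ := hpair f _ hV
      have ht : modelSet (⇑τ) W (f * g) = true :=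
        (modelSet_true_iff _ _ _).mpr (by rw [map_mul]; exact interior_subset hgV)
      rw [ht] at hgA
      exact ⟨f, hgA.symm, rfl⟩
    have hξη : ξ = η := by
      apply unique_param (⇑τ) hτ_dense W h_proper h_irred S ξ η
      · rwa [image_mulRightInv_eq] at hx_lower
      · intro h hh
        have h2 := (hx_upper hh).2
        rw [image_mulRightInv_eq] at h2
        exact h2
      · exact hlower_η
      · exact hupper_η
    rw [hξη, mem_closure_iff_nhds]
    intro V hV
    have h1 : (⇑τ) ⁻¹' V ∈ 𝒰 := by
      have := hη hV
      rwa [Ultrafilter.mem_coe, Ultrafilter.mem_map] at this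
    obtain ⟨g, hgV, hgA⟩ := Filter.nonempty_of_mem (Filter.inter_mem h1 (h𝒰A (N ∪ M)))
    refine ⟨τ g, hgV, ?_, g, rfl⟩
    rw [mem_TW]
    constructor
    · intro l hl
      have := hgA l (Finset.mem_union_left _ hl)
      rw [hN l hl] at this
      have := (modelSet_true_iff _ _ _).mp this
      rwa [map_mul] at this
    · intro j hj
      have := hgA j (Finset.mem_union_right _ hj)
      rw [hM j hj] at this
      have := (modelSet_false_iff _ _ _).mp this
      rwa [map_mul] at this
  · -- backward direction
    intro hT
    rw [mem_closure_iff_nhds]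
    intro U hU
    rw [nhds_pi] at hU
    obtain ⟨I, hIfin, V, hV, hVU⟩ := Filter.mem_pi.mp hU
    set F : Finset G := hIfin.toFinset with hF
    set N : Finset G := F.filter (fun g => x g = true) with hNdef
    set M : Finset G := F.filter (fun g => x g = false) with hMdef
    have hξcl := hT N M (fun g hg => (Finset.mem_filter.mp hg).2)
      (fun g hg => (Finset.mem_filter.mp hg).2)
    obtain ⟨h0, hh0T, g, hg⟩ :=
      closure_nonempty_iff.mp ⟨ξ, hξcl⟩
    subst hg
    refine ⟨shift g (modelSet (⇑τ) W), ?_, g, rfl⟩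
    apply hVU
    intro f hf
    have hfF : f ∈ F := hIfin.mem_toFinset.mpr hf
    have hval : shift g (modelSet (⇑τ) W) f = x f := by
      show modelSet (⇑τ) W (f * g) = x f
      cases hxf : x f with
      | true =>
        have hfN : f ∈ N := Finset.mem_filter.mpr ⟨hfF, hxf⟩
        have := (mem_TW.mp hh0T).1 f hfN
        exact (modelSet_true_iff _ _ _).mpr (by rw [map_mul]; exact this)
      | false =>
        have hfM : f ∈ M := Finset.mem_filter.mpr ⟨hfF, hxf⟩
        have := (mem_TW.mp hh0T).2 f hfM
        exact (modelSet_false_iff _ _ _).mpr (by rw [map_mul]; exact this)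
    rw [hval]
    exact mem_of_mem_nhds (hV f)
end

section
/- Let W ⊆ H be a proper, irredundant window and β : closure(O_G(x_W)) → H a continuous G-equivariant map with β(x_W) = 1_H. Let ξ ∈ H and g₁, g₂ ∈ G with τ(g₁), τ(g₂) ∈ frontier(W·ξ⁻¹) and τ(g₁) ≼_ξ τ(g₂). Then every x ∈ closure(O_G(x_W)) with β(x) = ξ and x(g₁) = 1 satisfies x(g₂) = 1. -/
open Topology Set

/-- `s ≼_ξ t`: there is `ε > 0` with
`s⁻¹·(B_ε(s) ∩ W·ξ⁻¹) ⊆ t⁻¹·(B_ε(t) ∩ W·ξ⁻¹)`. -/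
def precEq {H : Type*} [Group H] [MetricSpace H] (W : Set H) (ξ s t : H) : Prop :=
  ∃ ε > (0 : ℝ),
    (fun w => s⁻¹ * w) '' (Metric.ball s ε ∩ (fun w => w * ξ⁻¹) '' W) ⊆
    (fun w => t⁻¹ * w) '' (Metric.ball t ε ∩ (fun w => w * ξ⁻¹) '' W)

/-- If `τ(g₁), τ(g₂) ∈ ∂(W·ξ⁻¹)` and `τ(g₁) ≼_ξ τ(g₂)`, then every
`x` in the orbit closure of `x_W` with `β(x) = ξ` and `x(g₁) = 1` has
`x(g₂) = 1`. -/
theorem statement7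
    {G : Type*} [Group G] [Countable G]
    {H : Type*} [Group H] [MetricSpace H] [IsTopologicalGroup H] [CompactSpace H]
    (hd_bi : ∀ a b c : H, dist (c * a) (c * b) = dist a b ∧ dist (a * c) (b * c) = dist a b)
    (τ : G →* H) (hτ_inj : Function.Injective τ) (hτ_dense : DenseRange τ)
    (W : Set H)
    (h_proper : W = closure (interior W))
    (h_irred : ∀ ξ : H, (fun w => w * ξ) '' W = W → ξ = 1)
    (β : (G → Bool) → H)
    (hβ_cont : ContinuousOn β (closure (shiftOrbit (modelSet (⇑τ) W))))
    (hβ_equiv : ∀ g : G, ∀ y ∈ closure (shiftOrbit (modelSet (⇑τ) W)),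
      β (shift g y) = τ g * β y)
    (hβ_one : β (modelSet (⇑τ) W) = 1)
    (ξ : H) (g₁ g₂ : G)
    (hg₁ : τ g₁ ∈ frontier ((fun w => w * ξ⁻¹) '' W))
    (hg₂ : τ g₂ ∈ frontier ((fun w => w * ξ⁻¹) '' W))
    (hprec : precEq W ξ (τ g₁) (τ g₂)) :
    ∀ x ∈ closure (shiftOrbit (modelSet (⇑τ) W)),
      β x = ξ → x g₁ = true → x g₂ = true := by
  intro x hx hβx hx1
  set xW := modelSet (⇑τ) W with hxW
  -- extract a sequence of shifts converging to x
  obtain ⟨y, hyS, hyx⟩ := mem_closure_iff_seq_limit.mp hx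
  choose h hy using fun n => (hyS n : y n ∈ Set.range fun g => shift g xW)
  have hymem : ∀ n, y n ∈ closure (shiftOrbit xW) := fun n => subset_closure (hyS n)
  -- β(y n) = τ (h n)
  have hβy : ∀ n, β (y n) = τ (h n) := by
    intro n
    rw [← hy n, hβ_equiv (h n) xW, hβ_one, mul_one]
    exact subset_closure ⟨1, by funext g; simp [shift]⟩
  -- τ (h n) → ξ
  have hτh : Filter.Tendsto (fun n => τ (h n)) Filter.atTop (𝓝 ξ) := by
    have h1 : Filter.Tendsto y Filter.atTop (𝓝[closure (shiftOrbit xW)] x) :=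
      tendsto_nhdsWithin_of_tendsto_nhds_of_eventually_within y hyx
        (Filter.Eventually.of_forall hymem)
    have h2 := (hβ_cont x hx).tendsto.comp h1
    rw [hβx] at h2
    exact h2.congr hβy
  -- pointwise eventual equality
  have hpt : ∀ g : G, ∀ᶠ n in Filter.atTop, y n g = x g := by
    intro g
    have : Filter.Tendsto (fun n => y n g) Filter.atTop (𝓝 (x g)) :=
      ((continuous_apply g).continuousAt).tendsto.comp hyx
    rwa [nhds_discrete, Filter.tendsto_pure] at this
  obtain ⟨ε, hε, hsub⟩ := hprec
  have hclose : ∀ᶠ n in Filter.atTop, dist (τ (h n)) ξ < ε := by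
    have := hτh (Metric.ball_mem_nhds ξ hε)
    simpa [Metric.mem_ball] using this
  obtain ⟨n, hn1, hn2, hn3⟩ := ((hpt g₁).and ((hpt g₂).and hclose)).exists
  -- τ (g₁ * h n) ∈ W
  have hmem1 : τ (g₁ * h n) ∈ W := by
    have hy1 : y n g₁ = true := hn1.trans hx1
    rw [← hy n] at hy1
    by_contra hc
    simp [shift, hxW, modelSet, hc] at hy1
    exact hc (by rw [τ.map_mul]; exact hy1)
  -- the key point w
  set w : H := τ g₁ * τ (h n) * ξ⁻¹ with hw
  have hwdist : dist w (τ g₁) < ε := by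
    have e1 : dist (τ g₁ * (τ (h n) * ξ⁻¹)) (τ g₁ * 1) = dist (τ (h n) * ξ⁻¹) 1 :=
      (hd_bi (τ (h n) * ξ⁻¹) 1 (τ g₁)).1
    have e2 : dist (τ (h n) * ξ⁻¹ * ξ) (1 * ξ) = dist (τ (h n) * ξ⁻¹) 1 :=
      (hd_bi (τ (h n) * ξ⁻¹) 1 ξ).2
    have e3 : dist w (τ g₁) = dist (τ (h n)) ξ := by
      rw [hw, mul_assoc]
      rw [show τ g₁ * (τ (h n) * ξ⁻¹) = τ g₁ * (τ (h n) * ξ⁻¹) from rfl]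
      calc dist (τ g₁ * (τ (h n) * ξ⁻¹)) (τ g₁)
          = dist (τ g₁ * (τ (h n) * ξ⁻¹)) (τ g₁ * 1) := by rw [mul_one]
        _ = dist (τ (h n) * ξ⁻¹) 1 := e1
        _ = dist (τ (h n) * ξ⁻¹ * ξ) (1 * ξ) := e2.symm
        _ = dist (τ (h n)) ξ := by rw [inv_mul_cancel_right, one_mul]
    rw [e3]; exact hn3
  have hwW : w ∈ (fun v => v * ξ⁻¹) '' W := ⟨τ g₁ * τ (h n), by rw [← τ.map_mul]; exact hmem1, rfl⟩
  have hwin : (τ g₁)⁻¹ * w ∈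
      (fun v => (τ g₁)⁻¹ * v) '' (Metric.ball (τ g₁) ε ∩ (fun v => v * ξ⁻¹) '' W) :=
    ⟨w, ⟨Metric.mem_ball.mpr hwdist, hwW⟩, rfl⟩
  obtain ⟨v, ⟨_, hv2⟩, hveq⟩ := hsub hwin
  obtain ⟨u, hu, huv⟩ := hv2
  have hveq₀ : (τ g₂)⁻¹ * v = (τ g₁)⁻¹ * w := hveq
  have huv₀ : u * ξ⁻¹ = v := huv
  -- deduce τ (g₂ * h n) ∈ W
  have hveq' : v = τ g₂ * τ (h n) * ξ⁻¹ := by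
    have : τ g₂ * ((τ g₂)⁻¹ * v) = τ g₂ * ((τ g₁)⁻¹ * w) := by rw [hveq₀]
    rw [mul_inv_cancel_left, hw] at this
    rw [this]; group
  have hu' : u = τ (g₂ * h n) := by
    have : u * ξ⁻¹ = τ g₂ * τ (h n) * ξ⁻¹ := by rw [huv₀, hveq']
    have := mul_right_cancel this
    rw [this, τ.map_mul]
  have hmem2 : τ (g₂ * h n) ∈ W := hu' ▸ hu
  -- conclude
  have : y n g₂ = true := by
    rw [← hy n]
    simp only [shift, hxW, modelSet]
    rw [if_pos hmem2]
  rw [← hn2, this]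
end

section
/- Let W ⊆ H be a proper, irredundant window and β : closure(O_G(x_W)) → H a continuous G-equivariant map with β(x_W) = 1_H. Let k ∈ ℕ and suppose that for every ξ ∈ H the equivalence relation ∼_ξ has at most k equivalence classes on frontier(W·ξ⁻¹) ∩ τ(G). Then for every ξ ∈ H the fiber {x ∈ closure(O_G(x_W)) : β(x) = ξ} has at most 2^k elements. -/
open Topology Set

/-- `s ∼_ξ t`: both `s ≼_ξ t` and `t ≼_ξ s`. -/
def simEq {H : Type*} [Group H] [MetricSpace H] (W : Set H) (ξ s t : H) : Prop :=
  precEq W ξ s t ∧ precEq W ξ t s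

/-- If for every `ξ ∈ H` the relation `∼_ξ` has at most `k`
equivalence classes on `∂(W·ξ⁻¹) ∩ τ(G)`, then every fiber of `β` has at most
`2^k` elements. -/
theorem statement8
    {G : Type*} [Group G] [Countable G]
    {H : Type*} [Group H] [MetricSpace H] [IsTopologicalGroup H] [CompactSpace H]
    (hd_bi : ∀ a b c : H, dist (c * a) (c * b) = dist a b ∧ dist (a * c) (b * c) = dist a b)
    (τ : G →* H) (hτ_inj : Function.Injective τ) (hτ_dense : DenseRange τ)
    (W : Set H)
    (h_proper : W = closure (interior W))
    (h_irred : ∀ ξ : H, (fun w => w * ξ) '' W = W → ξ = 1)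
    (β : (G → Bool) → H)
    (hβ_cont : ContinuousOn β (closure (shiftOrbit (modelSet (⇑τ) W))))
    (hβ_equiv : ∀ g : G, ∀ y ∈ closure (shiftOrbit (modelSet (⇑τ) W)),
      β (shift g y) = τ g * β y)
    (hβ_one : β (modelSet (⇑τ) W) = 1)
    (k : ℕ)
    (hclasses : ∀ ξ : H, ∃ T : Finset H, T.card ≤ k ∧
      ∀ s ∈ frontier ((fun w => w * ξ⁻¹) '' W) ∩ Set.range τ,
        ∃ t ∈ T, t ∈ frontier ((fun w => w * ξ⁻¹) '' W) ∩ Set.range τ ∧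
          simEq W ξ s t) :
    ∀ ξ : H,
      {x ∈ closure (shiftOrbit (modelSet (⇑τ) W)) | β x = ξ}.Finite ∧
      {x ∈ closure (shiftOrbit (modelSet (⇑τ) W)) | β x = ξ}.ncard ≤ 2 ^ k := by
  classical
  intro ξ
  obtain ⟨T, hTk, hT⟩ := hclasses ξ
  set C := closure (shiftOrbit (modelSet (⇑τ) W)) with hC
  have hxWmem : modelSet (⇑τ) W ∈ shiftOrbit (modelSet (⇑τ) W) :=
    ⟨1, by funext h; simp [shift]⟩
  -- Key lemma: values of fiber elements are determined
  have key : ∀ x, x ∈ C → β x = ξ → ∀ h : G,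
      (τ h * ξ ∈ interior W → x h = true) ∧
      (τ h * ξ ∉ closure W → x h = false) ∧
      (∀ h' : G, simEq W ξ (τ h) (τ h') → x h = x h') := by
    intro x hx hβx
    obtain ⟨y, hy, hylim⟩ := mem_closure_iff_seq_limit.mp hx
    choose g hg using hy
    have hτg : Filter.Tendsto (fun n => τ (g n)) Filter.atTop (𝓝 ξ) := by
      have h1 : Filter.Tendsto y Filter.atTop (𝓝[C] x) := by
        rw [tendsto_nhdsWithin_iff]
        exact ⟨hylim, Filter.Eventually.of_forall fun n =>
          subset_closure (hg n ▸ ⟨g n, rfl⟩)⟩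
      have h2 := (hβ_cont x hx).tendsto.comp h1
      rw [hβx] at h2
      have h3 : ∀ n, β (y n) = τ (g n) := fun n => by
        rw [← hg n, hβ_equiv (g n) _ (subset_closure hxWmem), hβ_one, mul_one]
      have h2' : Filter.Tendsto (fun n => β (y n)) Filter.atTop (𝓝 ξ) := h2
      exact h2'.congr h3
    have hcoord : ∀ h : G, ∀ᶠ n in Filter.atTop,
        (if τ h * τ (g n) ∈ W then true else false) = x h := by
      intro h
      have h4 : Filter.Tendsto (fun n => y n h) Filter.atTop (𝓝 (x h)) :=
        tendsto_pi_nhds.mp hylim h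
      have hmem : {x h} ∈ 𝓝 (x h) := (isOpen_discrete {x h}).mem_nhds rfl
      have h5 : ∀ᶠ n in Filter.atTop, y n h ∈ ({x h} : Set Bool) := h4 hmem
      filter_upwards [h5] with n hn
      rw [← hg n] at hn
      simpa [shift, modelSet, map_mul] using hn
    intro h
    refine ⟨?_, ?_, ?_⟩
    · intro hint
      have hmem : interior W ∈ 𝓝 (τ h * ξ) := isOpen_interior.mem_nhds hint
      have htd : Filter.Tendsto (fun n => τ h * τ (g n)) Filter.atTop (𝓝 (τ h * ξ)) :=
        hτg.const_mul _
      have hev : ∀ᶠ n in Filter.atTop, τ h * τ (g n) ∈ interior W := htd hmem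
      obtain ⟨n, hn1, hn2⟩ := ((hcoord h).and hev).exists
      rw [← hn1, if_pos (interior_subset hn2)]
    · intro hnot
      have hmem : (closure W)ᶜ ∈ 𝓝 (τ h * ξ) :=
        isClosed_closure.isOpen_compl.mem_nhds hnot
      have htd : Filter.Tendsto (fun n => τ h * τ (g n)) Filter.atTop (𝓝 (τ h * ξ)) :=
        hτg.const_mul _
      have hev : ∀ᶠ n in Filter.atTop, τ h * τ (g n) ∈ (closure W)ᶜ := htd hmem
      obtain ⟨n, hn1, hn2⟩ := ((hcoord h).and hev).exists
      rw [← hn1, if_neg (fun hw => hn2 (subset_closure hw))]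
    · rintro h' ⟨⟨ε₁, hε₁, hsub₁⟩, ⟨ε₂, hε₂, hsub₂⟩⟩
      have hu : Filter.Tendsto (fun n => τ (g n) * ξ⁻¹) Filter.atTop (𝓝 1) := by
        simpa using hτg.mul_const ξ⁻¹
      have hball : ∀ᶠ n in Filter.atTop, dist (τ (g n) * ξ⁻¹) 1 < min ε₁ ε₂ :=
        Metric.tendsto_nhds.mp hu _ (lt_min hε₁ hε₂)
      obtain ⟨n, ⟨hxh, hxh'⟩, hdist⟩ := (((hcoord h).and (hcoord h')).and hball).exists
      set u : H := τ (g n) * ξ⁻¹ with hu_def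
      have hiff : ∀ c : H, (c * τ (g n) ∈ W) ↔ c * u ∈ (fun w => w * ξ⁻¹) '' W := by
        intro c
        rw [hu_def]
        constructor
        · intro hc; exact ⟨c * τ (g n), hc, mul_assoc _ _ _⟩
        · rintro ⟨w, hw, hww⟩
          have h7 : w = c * τ (g n) :=
            mul_right_cancel (hww.trans (mul_assoc c (τ (g n)) ξ⁻¹).symm)
          rwa [h7] at hw
      have hdists : ∀ c : H, dist (c * u) c = dist u 1 := by
        intro c
        have := (hd_bi u 1 c).1
        rwa [mul_one] at this
      have hmain : (τ h * u ∈ (fun w => w * ξ⁻¹) '' W) ↔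
          (τ h' * u ∈ (fun w => w * ξ⁻¹) '' W) := by
        constructor
        · intro hs
          have hmem1 : u ∈ (fun w => (τ h)⁻¹ * w) ''
              (Metric.ball (τ h) ε₁ ∩ (fun w => w * ξ⁻¹) '' W) := by
            refine ⟨τ h * u, ⟨?_, hs⟩, by group⟩
            rw [Metric.mem_ball, hdists]
            exact lt_of_lt_of_le hdist (min_le_left _ _)
          obtain ⟨w, ⟨hwball, hwW⟩, hwu⟩ := hsub₁ hmem1
          have : w = τ h' * u := by
            rw [← hwu]; group
          rwa [this] at hwW
        · intro hs
          have hmem1 : u ∈ (fun w => (τ h')⁻¹ * w) ''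
              (Metric.ball (τ h') ε₂ ∩ (fun w => w * ξ⁻¹) '' W) := by
            refine ⟨τ h' * u, ⟨?_, hs⟩, by group⟩
            rw [Metric.mem_ball, hdists]
            exact lt_of_lt_of_le hdist (min_le_right _ _)
          obtain ⟨w, ⟨hwball, hwW⟩, hwu⟩ := hsub₂ hmem1
          have : w = τ h * u := by
            rw [← hwu]; group
          rwa [this] at hwW
      rw [← hxh, ← hxh']
      exact if_congr ((hiff (τ h)).trans (hmain.trans (hiff (τ h')).symm)) rfl rfl
  -- the injection into functions on T
  set φ : (G → Bool) → (↥T → Bool) := fun x t =>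
    if hg : ∃ g : G, τ g = (t : H) then x (Classical.choose hg) else false with hφ
  set S := {x ∈ C | β x = ξ} with hS
  have hinj : Set.InjOn φ S := by
    rintro x ⟨hxC, hβx⟩ x' ⟨hx'C, hβx'⟩ hφeq
    funext h
    by_cases h1 : τ h * ξ ∈ interior W
    · rw [(key x hxC hβx h).1 h1, (key x' hx'C hβx' h).1 h1]
    by_cases h2 : τ h * ξ ∈ closure W
    swap
    · rw [(key x hxC hβx h).2.1 h2, (key x' hx'C hβx' h).2.1 h2]
    -- frontier case
    have hfr : τ h ∈ frontier ((fun w => w * ξ⁻¹) '' W) := by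
      have himg : (fun w => w * ξ⁻¹) '' W = (Homeomorph.mulRight ξ) ⁻¹' W := by
        ext w
        simp [Set.mem_image, mul_inv_eq_iff_eq_mul]
      rw [himg, ← Homeomorph.preimage_frontier]
      exact ⟨h2, h1⟩
    obtain ⟨t, htT, ⟨htfr, g₀, hg₀⟩, hsim⟩ := hT (τ h) ⟨hfr, h, rfl⟩
    have hex : ∃ g : G, τ g = t := ⟨g₀, hg₀⟩
    have hxt : x h = x (Classical.choose hex) :=
      (key x hxC hβx h).2.2 _ (by rw [Classical.choose_spec hex]; exact hsim)
    have hx't : x' h = x' (Classical.choose hex) :=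
      (key x' hx'C hβx' h).2.2 _ (by rw [Classical.choose_spec hex]; exact hsim)
    have hval : φ x ⟨t, htT⟩ = φ x' ⟨t, htT⟩ := by rw [hφeq]
    simp only [hφ, dif_pos hex] at hval
    rw [hxt, hx't, hval]
  have hfin : S.Finite := Set.Finite.of_finite_image (Set.toFinite _) hinj
  refine ⟨hfin, ?_⟩
  calc S.ncard = (φ '' S).ncard := (Set.ncard_image_of_injOn hinj).symm
    _ ≤ (Set.univ : Set (↥T → Bool)).ncard :=
        Set.ncard_le_ncard (Set.subset_univ _) Set.finite_univ
    _ = Fintype.card (↥T → Bool) := by rw [Set.ncard_univ, Nat.card_eq_fintype_card]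
    _ = 2 ^ T.card := by simp [Fintype.card_fun]
    _ ≤ 2 ^ k := Nat.pow_le_pow_right (by norm_num) hTk
end

section
/- Let W ⊆ H be a proper, irredundant window, ξ ∈ H, and x ∈ {0,1}^G with τ(G) ∩ interior(W)·ξ⁻¹ ⊆ {τ(g) : x(g) = 1} ⊆ τ(G) ∩ W·ξ⁻¹. Suppose that for all finite sets N₀ ⊆ {g ∈ G : x(g) = 1} and M₀ ⊆ {g ∈ G : x(g) = 0} with τ(N₀) ∪ τ(M₀) ⊆ frontier(W·ξ⁻¹), and for every ε > 0, the set B_ε(ξ) ∩ T_W(N₀, M₀) has nonempty interior. Then x ∈ closure(O_G(x_W)). -/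
open Topology Set

/-- Closure criterion in a product of discrete spaces. -/
lemma mem_closure_pi_discrete {ι A : Type*} [TopologicalSpace A] [DiscreteTopology A]
    {x : ι → A} {s : Set (ι → A)}
    (h : ∀ F : Finset ι, ∃ y ∈ s, ∀ i ∈ F, y i = x i) : x ∈ closure s := by
  rw [mem_closure_iff_nhds]
  intro U hU
  rw [nhds_pi, Filter.mem_pi] at hU
  obtain ⟨I, hIfin, t, ht, hsub⟩ := hU
  obtain ⟨y, hy, hyx⟩ := h hIfin.toFinset
  refine ⟨y, hsub fun i hi => ?_, hy⟩
  have := ht i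
  rw [nhds_discrete, Filter.mem_pure] at this
  rw [hyx i (hIfin.mem_toFinset.mpr hi)]
  exact this

lemma mem_image_mul_left' {H : Type*} [Group H] (a b : H) (S : Set H) :
    b ∈ (fun w => a * w) '' S ↔ a⁻¹ * b ∈ S := by
  constructor
  · rintro ⟨w, hw, rfl⟩; simpa using hw
  · intro hw; exact ⟨a⁻¹ * b, hw, by group⟩

lemma mem_image_mul_right' {H : Type*} [Group H] (a b : H) (S : Set H) :
    b ∈ (fun w => w * a) '' S ↔ b * a⁻¹ ∈ S := by
  constructor
  · rintro ⟨w, hw, rfl⟩; simpa using hw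
  · intro hw; exact ⟨b * a⁻¹, hw, by group⟩

/-- Sufficient criterion for membership in the orbit closure of
`x_W`: if for all finite `N₀ ⊆ {x = 1}`, `M₀ ⊆ {x = 0}` whose `τ`-images lie in
`∂(W·ξ⁻¹)` and all `ε > 0` the set `B_ε(ξ) ∩ T_W(N₀,M₀)` has nonempty
interior, then `x ∈ closure(O_G(x_W))`. -/
theorem statement9
    {G : Type*} [Group G] [Countable G]
    {H : Type*} [Group H] [MetricSpace H] [IsTopologicalGroup H] [CompactSpace H]
    (hd_bi : ∀ a b c : H, dist (c * a) (c * b) = dist a b ∧ dist (a * c) (b * c) = dist a b)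
    (τ : G →* H) (hτ_inj : Function.Injective τ) (hτ_dense : DenseRange τ)
    (W : Set H)
    (h_proper : W = closure (interior W))
    (h_irred : ∀ ξ : H, (fun w => w * ξ) '' W = W → ξ = 1)
    (ξ : H) (x : G → Bool)
    (hx_lower : Set.range τ ∩ (fun w => w * ξ⁻¹) '' interior W
      ⊆ {h : H | ∃ g : G, x g = true ∧ τ g = h})
    (hx_upper : {h : H | ∃ g : G, x g = true ∧ τ g = h}
      ⊆ Set.range τ ∩ (fun w => w * ξ⁻¹) '' W)
    (hcrit : ∀ N₀ M₀ : Finset G,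
      (∀ g ∈ N₀, x g = true) → (∀ g ∈ M₀, x g = false) →
      (∀ g ∈ N₀, τ g ∈ frontier ((fun w => w * ξ⁻¹) '' W)) →
      (∀ g ∈ M₀, τ g ∈ frontier ((fun w => w * ξ⁻¹) '' W)) →
      ∀ ε > (0 : ℝ), (interior (Metric.ball ξ ε ∩ TW (⇑τ) W N₀ M₀)).Nonempty) :
    x ∈ closure (shiftOrbit (modelSet (⇑τ) W)) := by
  classical
  -- Basic facts about W and V := W·ξ⁻¹
  have hWclosed : IsClosed W := by rw [h_proper]; exact isClosed_closure
  set V : Set H := (fun w => w * ξ⁻¹) '' W with hVdef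
  have hVeq : V = (Homeomorph.mulRight ξ⁻¹) '' W := rfl
  have hVclosed : IsClosed V := by
    rw [hVeq, Homeomorph.isClosed_image]; exact hWclosed
  have hIntV : interior V = (fun w => w * ξ⁻¹) '' interior W := by
    rw [hVeq, ← Homeomorph.image_interior]; rfl
  -- membership translations
  have hmemV : ∀ h : H, h ∈ V ↔ h * ξ ∈ W := by
    intro h; rw [hVdef, mem_image_mul_right']; simp
  have hmemIntV : ∀ h : H, h ∈ interior V ↔ h * ξ ∈ interior W := by
    intro h; rw [hIntV, mem_image_mul_right']; simp
  -- x g = true → τ g ∈ V ;  x g = false → τ g ∉ interior V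
  have hTrue : ∀ g : G, x g = true → τ g ∈ V := by
    intro g hg
    exact (hx_upper ⟨g, hg, rfl⟩).2
  have hFalse : ∀ g : G, x g = false → τ g ∉ interior V := by
    intro g hg hmem
    rw [hIntV] at hmem
    obtain ⟨g', hg', hgg'⟩ := hx_lower ⟨⟨g, rfl⟩, hmem⟩
    rw [hτ_inj hgg', hg] at hg'
    exact Bool.false_ne_true hg'
  -- the closure criterion
  apply mem_closure_pi_discrete
  intro F
  set N : Finset G := F.filter (fun g => x g = true) with hNdef
  set M : Finset G := F.filter (fun g => x g = false) with hMdef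
  set N₀ : Finset G := N.filter (fun g => τ g ∈ frontier V) with hN0def
  set N₁ : Finset G := N.filter (fun g => τ g ∈ interior V) with hN1def
  set M₀ : Finset G := M.filter (fun g => τ g ∈ V) with hM0def
  set M₁ : Finset G := M.filter (fun g => τ g ∉ V) with hM1def
  -- apply the criterion hypothesis
  have hfrontV : frontier V = V \ interior V := by
    rw [frontier, hVclosed.closure_eq]
  have hcrit' := hcrit N₀ M₀
    (fun g hg => (Finset.mem_filter.mp (Finset.mem_filter.mp hg).1).2)
    (fun g hg => (Finset.mem_filter.mp (Finset.mem_filter.mp hg).1).2)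
    (fun g hg => (Finset.mem_filter.mp hg).2)
    (fun g hg => by
      have h1 := (Finset.mem_filter.mp hg).2
      have h2 := hFalse g (Finset.mem_filter.mp (Finset.mem_filter.mp hg).1).2
      rw [hfrontV]; exact ⟨h1, h2⟩)
  -- the open neighbourhood handling N₁ and M₁
  set U₀ : Set H :=
    (⋂ l ∈ N₁, (fun h => τ l * h) ⁻¹' interior W) ∩
    (⋂ j ∈ M₁, ((fun h => τ j * h) ⁻¹' W)ᶜ) with hU0def
  have hU0open : IsOpen U₀ := by
    apply IsOpen.inter
    · exact isOpen_biInter_finset fun l _ =>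
        isOpen_interior.preimage (continuous_mul_left (τ l))
    · exact isOpen_biInter_finset fun j _ =>
        (hWclosed.preimage (continuous_mul_left (τ j))).isOpen_compl
  have hξU0 : ξ ∈ U₀ := by
    constructor
    · refine Set.mem_iInter₂.mpr fun l hl => ?_
      have := (Finset.mem_filter.mp hl).2
      exact (hmemIntV (τ l)).mp this
    · refine Set.mem_iInter₂.mpr fun j hj => ?_
      have := (Finset.mem_filter.mp hj).2
      intro hc
      exact this ((hmemV (τ j)).mpr hc)
  obtain ⟨ε, hε, hball⟩ := Metric.isOpen_iff.mp hU0open ξ hξU0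
  obtain ⟨z, hz⟩ := hcrit' ε hε
  obtain ⟨g₀, hg₀⟩ := hτ_dense.exists_mem_open isOpen_interior ⟨z, hz⟩
  have hg₀' : τ g₀ ∈ Metric.ball ξ ε ∩ TW (⇑τ) W N₀ M₀ := interior_subset hg₀
  -- the witness
  refine ⟨shift g₀ (modelSet (⇑τ) W), ⟨g₀, rfl⟩, fun h hF => ?_⟩
  have hτmul : (⇑τ) (h * g₀) = τ h * τ g₀ := map_mul τ h g₀
  show modelSet (⇑τ) W (h * g₀) = x h
  rw [modelSet, hτmul]
  have hg₀ball : τ g₀ ∈ U₀ := hball hg₀'.1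
  rcases Bool.eq_false_or_eq_true (x h) with hxh | hxh
  · -- x h = true : show τ h * τ g₀ ∈ W
    rw [hxh, if_pos]
    have hhN : h ∈ N := Finset.mem_filter.mpr ⟨hF, hxh⟩
    by_cases hhI : τ h ∈ interior V
    · -- h ∈ N₁ : use the ball
      have hhN1 : h ∈ N₁ := Finset.mem_filter.mpr ⟨hhN, hhI⟩
      exact interior_subset (Set.mem_iInter₂.mp hg₀ball.1 h hhN1)
    · -- h ∈ N₀ : use TW
      have hhN0 : h ∈ N₀ := Finset.mem_filter.mpr ⟨hhN, by
        rw [hfrontV]; exact ⟨hTrue h hxh, hhI⟩⟩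
      have := Set.mem_iInter₂.mp hg₀'.2.1 h hhN0
      simpa using (mem_image_mul_left' (τ h)⁻¹ (τ g₀) W).mp this
  · -- x h = false : show τ h * τ g₀ ∉ W
    rw [hxh, if_neg]
    intro hc
    have hhM : h ∈ M := Finset.mem_filter.mpr ⟨hF, hxh⟩
    by_cases hhV : τ h ∈ V
    · -- h ∈ M₀ : contradicts TW
      have hhM0 : h ∈ M₀ := Finset.mem_filter.mpr ⟨hhM, hhV⟩
      apply hg₀'.2.2
      exact Set.mem_biUnion hhM0 ((mem_image_mul_left' (τ h)⁻¹ (τ g₀) W).mpr (by simpa using hc))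
    · -- h ∈ M₁ : contradicts the ball
      have hhM1 : h ∈ M₁ := Finset.mem_filter.mpr ⟨hhM, hhV⟩
      exact Set.mem_iInter₂.mp hg₀ball.2 h hhM1 hc
end

section
/- Let W ⊆ H be any subset and ξ ∈ H. Let N, M ⊆ G be finite sets with τ(N) ∪ τ(M) ⊆ frontier(W·ξ⁻¹), and suppose there exist l₀ ∈ N and j₀ ∈ M such that τ(l₀) ≼_ξ τ(l) for all l ∈ N and τ(j) ≼_ξ τ(j₀) for all j ∈ M. Then there exists ε₀ > 0 such that for all 0 < ε ≤ ε₀ one has B_ε(ξ) ∩ T_W(N, M) = B_ε(ξ) ∩ T_W({l₀}, {j₀}). -/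
open Topology Set

lemma mem_inv_mul_img {H : Type*} [Group H] (a x : H) (W : Set H) :
    x ∈ (fun w => a⁻¹ * w) '' W ↔ a * x ∈ W := by
  constructor
  · rintro ⟨w, hw, rfl⟩; simpa using hw
  · intro h; exact ⟨a * x, h, by group⟩

lemma precEq_key {H : Type*} [Group H] [MetricSpace H]
    (hd_bi : ∀ a b c : H, dist (c * a) (c * b) = dist a b ∧ dist (a * c) (b * c) = dist a b)
    {W : Set H} {ξ s t : H} (h : precEq W ξ s t) :
    ∃ ε > (0 : ℝ), ∀ x : H, dist x ξ < ε → s * x ∈ W → t * x ∈ W := by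
  obtain ⟨ε, hε, hsub⟩ := h
  refine ⟨ε, hε, fun x hx hsx => ?_⟩
  have hball : s * (x * ξ⁻¹) ∈ Metric.ball s ε := by
    have h1 : dist (s * (x * ξ⁻¹)) s = dist (x * ξ⁻¹) 1 := by
      have := (hd_bi (x * ξ⁻¹) 1 s).1
      rwa [mul_one] at this
    have h2 : dist (x * ξ⁻¹) 1 = dist x ξ := by
      have := (hd_bi x ξ ξ⁻¹).2
      rwa [mul_inv_cancel] at this
    simpa [Metric.mem_ball, h1, h2] using hx
  have h1 : x * ξ⁻¹ ∈
      (fun w => s⁻¹ * w) '' (Metric.ball s ε ∩ (fun w => w * ξ⁻¹) '' W) := by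
    refine ⟨s * (x * ξ⁻¹), ⟨hball, ⟨s * x, hsx, by group⟩⟩, by group⟩
  obtain ⟨y, ⟨hy1, w, hw, hwy⟩, hy2⟩ := hsub h1
  simp only at hy2 hwy
  have hy : y = t * (x * ξ⁻¹) := by
    have : t * (t⁻¹ * y) = t * (x * ξ⁻¹) := by rw [hy2]
    simpa [mul_assoc] using this
  have hwtx : w = t * x := by
    have h3 : w * ξ⁻¹ = (t * x) * ξ⁻¹ := hwy.trans (by rw [hy]; group)
    exact mul_right_cancel h3
  rwa [hwtx] at hw

/-- if `τ(N) ∪ τ(M) ⊆ ∂(W·ξ⁻¹)`, `τ(l₀)` is a `≼_ξ`-minimum for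
`N` and `τ(j₀)` a `≼_ξ`-maximum for `M`, then near `ξ` the set `T_W(N, M)`
agrees with `T_W({l₀}, {j₀})`. -/
theorem statement10
    {G : Type*} [Group G] [Countable G]
    {H : Type*} [Group H] [MetricSpace H] [IsTopologicalGroup H] [CompactSpace H]
    (hd_bi : ∀ a b c : H, dist (c * a) (c * b) = dist a b ∧ dist (a * c) (b * c) = dist a b)
    (τ : G →* H) (hτ_inj : Function.Injective τ) (hτ_dense : DenseRange τ)
    (W : Set H) (ξ : H)
    (N M : Finset G)
    (hN : ∀ g ∈ N, τ g ∈ frontier ((fun w => w * ξ⁻¹) '' W))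
    (hM : ∀ g ∈ M, τ g ∈ frontier ((fun w => w * ξ⁻¹) '' W))
    (l₀ j₀ : G) (hl₀ : l₀ ∈ N) (hj₀ : j₀ ∈ M)
    (hmin : ∀ l ∈ N, precEq W ξ (τ l₀) (τ l))
    (hmax : ∀ j ∈ M, precEq W ξ (τ j) (τ j₀)) :
    ∃ ε₀ > (0 : ℝ), ∀ ε : ℝ, 0 < ε → ε ≤ ε₀ →
      Metric.ball ξ ε ∩ TW (⇑τ) W N M
        = Metric.ball ξ ε ∩ TW (⇑τ) W {l₀} {j₀} := by
  classical
  have hNc : ∀ l ∈ N, ∃ ε > (0:ℝ), ∀ x : H, dist x ξ < ε → τ l₀ * x ∈ W → τ l * x ∈ W :=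
    fun l hl => precEq_key hd_bi (hmin l hl)
  have hMc : ∀ j ∈ M, ∃ ε > (0:ℝ), ∀ x : H, dist x ξ < ε → τ j * x ∈ W → τ j₀ * x ∈ W :=
    fun j hj => precEq_key hd_bi (hmax j hj)
  choose! f hf hf' using hNc
  choose! g hg hg' using hMc
  set ε₀ : ℝ := min (N.inf' (Finset.nonempty_of_ne_empty (Finset.ne_empty_of_mem hl₀)) f) (M.inf' (Finset.nonempty_of_ne_empty (Finset.ne_empty_of_mem hj₀)) g) with hε₀def
  have hε₀pos : 0 < ε₀ := by
    rw [hε₀def, lt_min_iff, Finset.lt_inf'_iff, Finset.lt_inf'_iff]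
    exact ⟨fun l hl => hf l hl, fun j hj => hg j hj⟩
  refine ⟨ε₀, hε₀pos, fun ε hε hεle => ?_⟩
  ext x
  simp only [Set.mem_inter_iff, TW, Set.mem_diff, Set.mem_iInter, Set.mem_iUnion,
    Finset.mem_singleton, not_exists]
  constructor
  · rintro ⟨hxb, hall, hnone⟩
    refine ⟨hxb, fun l hl => ?_, fun j hj => ?_⟩
    · rw [hl]; exact hall l₀ hl₀
    · intro hmem
      exact hnone j₀ hj₀ (hj ▸ hmem)
  · rintro ⟨hxb, hl0, hj0⟩
    have hdx : dist x ξ < ε₀ := lt_of_lt_of_le (Metric.mem_ball.mp hxb) hεle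
    have hl0' : τ l₀ * x ∈ W := (mem_inv_mul_img (τ l₀) x W).mp (hl0 l₀ rfl)
    refine ⟨hxb, fun l hl => ?_, fun j hj hmem => ?_⟩
    · have hεl : ε₀ ≤ f l := le_trans (min_le_left _ _) (Finset.inf'_le f hl)
      exact (mem_inv_mul_img (τ l) x W).mpr (hf' l hl x (lt_of_lt_of_le hdx hεl) hl0')
    · have hεj : ε₀ ≤ g j := le_trans (min_le_right _ _) (Finset.inf'_le g hj)
      have : τ j₀ * x ∈ W :=
        hg' j hj x (lt_of_lt_of_le hdx hεj) ((mem_inv_mul_img (τ j) x W).mp hmem)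
      exact hj0 j₀ rfl ((mem_inv_mul_img (τ j₀) x W).mpr this)
end

section
/- Let W ⊆ H be a proper, irredundant window, β : closure(O_G(x_W)) → H a continuous G-equivariant map with β(x_W) = 1_H, and ξ ∈ H. Suppose the collection 𝒮 of ∼_ξ-equivalence classes of frontier(W·ξ⁻¹) ∩ τ(G) is written as a disjoint union 𝒮 = 𝒮⁻ ∪ 𝒮⁺ such that one of the following holds: (a) 𝒮⁺ = ∅ and 𝒮⁻ has a ≼_ξ-maximum class; (b) 𝒮⁻ = ∅ and 𝒮⁺ has a ≼_ξ-minimum class; (c) 𝒮⁻ has a ≼_ξ-maximum class S₁, 𝒮⁺ has a ≼_ξ-minimum class S₂, and S₁ ≺_ξ S₂. Define x ∈ {0,1}^G by x(g) = 1 ⟺ τ(g) ∈ interior(W)·ξ⁻¹ ∪ ⋃_{S ∈ 𝒮⁺} S. Then x ∈ closure(O_G(x_W)) and β(x) = ξ. -/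
open Topology Set

/-- `S` is a similarity class with respect to `ξ`, i.e. a `∼_ξ`-equivalence
class of `∂(W·ξ⁻¹) ∩ τ(G)`. -/
def isSimClass {G H : Type*} [Group H] [MetricSpace H] (τ : G → H) (W : Set H)
    (ξ : H) (S : Set H) : Prop :=
  ∃ s ∈ frontier ((fun w => w * ξ⁻¹) '' W) ∩ Set.range τ,
    S = {t ∈ frontier ((fun w => w * ξ⁻¹) '' W) ∩ Set.range τ | simEq W ξ t s}

/-- The order on similarity classes: `S ≼_ξ S'` iff `s ≼_ξ s'` for every
`s ∈ S`, `s' ∈ S'`. -/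
def classLe {H : Type*} [Group H] [MetricSpace H] (W : Set H) (ξ : H)
    (S S' : Set H) : Prop :=
  ∀ s ∈ S, ∀ s' ∈ S', precEq W ξ s s'

section helpers
set_option linter.unusedSectionVars false
variable {H : Type*} [Group H] [MetricSpace H]

lemma mem_tr {W : Set H} {ξ w : H} : w ∈ (fun v => v * ξ⁻¹) '' W ↔ w * ξ ∈ W := by
  constructor
  · rintro ⟨v, hv, rfl⟩
    simpa using hv
  · intro h
    exact ⟨w * ξ, h, by group⟩

variable (hd_bi : ∀ a b c : H, dist (c * a) (c * b) = dist a b ∧ dist (a * c) (b * c) = dist a b)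

include hd_bi

lemma dist_mul_one (u η : H) : dist (u * η) u = dist η 1 := by
  have := (hd_bi η 1 u).1
  rwa [mul_one] at this

lemma mem_loc {W : Set H} {ξ : H} (u : H) (ε : ℝ) (η : H) :
    η ∈ (fun w => u⁻¹ * w) '' (Metric.ball u ε ∩ (fun w => w * ξ⁻¹) '' W) ↔
      dist η 1 < ε ∧ u * η ∈ (fun w => w * ξ⁻¹) '' W := by
  constructor
  · rintro ⟨w, ⟨hb, hw⟩, rfl⟩
    have h1 : u * (u⁻¹ * w) = w := by group
    rw [h1]
    refine ⟨?_, hw⟩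
    rw [← dist_mul_one hd_bi u (u⁻¹ * w), h1]
    exact hb
  · rintro ⟨hd, hm⟩
    refine ⟨u * η, ⟨?_, hm⟩, by group⟩
    rw [Metric.mem_ball, dist_mul_one hd_bi]
    exact hd

lemma precEq_iff {W : Set H} {ξ s t : H} :
    precEq W ξ s t ↔ ∃ ε > (0:ℝ), ∀ η : H, dist η 1 < ε →
      s * η ∈ (fun w => w * ξ⁻¹) '' W → t * η ∈ (fun w => w * ξ⁻¹) '' W := by
  constructor
  · rintro ⟨ε, hε, hsub⟩
    refine ⟨ε, hε, fun η hη hs => ?_⟩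
    have := hsub ((mem_loc hd_bi s ε η).2 ⟨hη, hs⟩)
    exact ((mem_loc hd_bi t ε η).1 this).2
  · rintro ⟨ε, hε, himp⟩
    refine ⟨ε, hε, fun η hη => ?_⟩
    obtain ⟨h1, h2⟩ := (mem_loc hd_bi s ε η).1 hη
    exact (mem_loc hd_bi t ε η).2 ⟨h1, himp η h1 h2⟩

omit hd_bi in
lemma precEq_refl {W : Set H} {ξ s : H} : precEq W ξ s s :=
  ⟨1, one_pos, subset_rfl⟩

lemma precEq_trans {W : Set H} {ξ s t u : H} (h1 : precEq W ξ s t) (h2 : precEq W ξ t u) :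
    precEq W ξ s u := by
  obtain ⟨ε₁, hε₁, H1⟩ := (precEq_iff hd_bi).1 h1
  obtain ⟨ε₂, hε₂, H2⟩ := (precEq_iff hd_bi).1 h2
  refine (precEq_iff hd_bi).2 ⟨min ε₁ ε₂, lt_min hε₁ hε₂, fun η hη hs => ?_⟩
  exact H2 η (lt_of_lt_of_le hη (min_le_right _ _))
    (H1 η (lt_of_lt_of_le hη (min_le_left _ _)) hs)

lemma not_precEq {W : Set H} {ξ s t : H} (h : ¬ precEq W ξ s t) :
    ∀ ε > (0:ℝ), ∃ η : H, dist η 1 < ε ∧ s * η ∈ (fun w => w * ξ⁻¹) '' W ∧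
      t * η ∉ (fun w => w * ξ⁻¹) '' W := by
  intro ε hε
  by_contra hc
  push_neg at hc
  exact h ((precEq_iff hd_bi).2 ⟨ε, hε, fun η h1 h2 => hc η h1 h2⟩)

lemma simEq_trans {W : Set H} {ξ s t u : H} (h1 : simEq W ξ s t) (h2 : simEq W ξ t u) :
    simEq W ξ s u :=
  ⟨precEq_trans hd_bi h1.1 h2.1, precEq_trans hd_bi h2.2 h1.2⟩

omit hd_bi in
lemma simEq_symm {W : Set H} {ξ s t : H} (h : simEq W ξ s t) : simEq W ξ t s := ⟨h.2, h.1⟩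

omit hd_bi in
lemma simEq_refl {W : Set H} {ξ s : H} : simEq W ξ s s := ⟨precEq_refl, precEq_refl⟩

omit hd_bi in
lemma simClass_subset {G : Type*} {τ : G → H} {W : Set H} {ξ : H} {S : Set H}
    (h : isSimClass τ W ξ S) :
    S ⊆ frontier ((fun w => w * ξ⁻¹) '' W) ∩ Set.range τ := by
  obtain ⟨a, ha, rfl⟩ := h
  exact fun u hu => hu.1

lemma class_eq {G : Type*} {τ : G → H} {W : Set H} {ξ : H} {S S' : Set H}
    (h : isSimClass τ W ξ S) (h' : isSimClass τ W ξ S') {u : H}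
    (hu : u ∈ S) (hu' : u ∈ S') : S = S' := by
  obtain ⟨a, ha, rfl⟩ := h
  obtain ⟨b, hb, rfl⟩ := h'
  obtain ⟨huF, hua⟩ := hu
  obtain ⟨-, hub⟩ := hu'
  ext v
  constructor
  · rintro ⟨hvF, hva⟩
    exact ⟨hvF, simEq_trans hd_bi hva (simEq_trans hd_bi (simEq_symm hua) hub)⟩
  · rintro ⟨hvF, hvb⟩
    exact ⟨hvF, simEq_trans hd_bi hvb (simEq_trans hd_bi (simEq_symm hub) hua)⟩

omit hd_bi in
lemma simClass_mem {G : Type*} {τ : G → H} {W : Set H} {ξ : H} {S : Set H}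
    (h : isSimClass τ W ξ S) :
    ∃ s ∈ S, s ∈ frontier ((fun w => w * ξ⁻¹) '' W) ∩ Set.range τ := by
  obtain ⟨a, ha, rfl⟩ := h
  exact ⟨a, ⟨ha, simEq_refl⟩, ha⟩

end helpers

/-- if the set of similarity classes w.r.t. `ξ` decomposes as
`𝒮⁻ ⊎ 𝒮⁺` where (a) `𝒮⁺ = ∅` and `𝒮⁻` has a maximum, or (b) `𝒮⁻ = ∅` and `𝒮⁺`
has a minimum, or (c) the maximum `S₁` of `𝒮⁻` and the minimum `S₂` of `𝒮⁺`
satisfy `S₁ ≺_ξ S₂`, then the array `x` with `x(g) = 1 ⟺ τ(g) ∈ int(W)ξ⁻¹ ∪ ⋃ 𝒮⁺`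
belongs to the fiber of `β` over `ξ`. -/
theorem statement11
    {G : Type*} [Group G] [Countable G]
    {H : Type*} [Group H] [MetricSpace H] [IsTopologicalGroup H] [CompactSpace H]
    (hd_bi : ∀ a b c : H, dist (c * a) (c * b) = dist a b ∧ dist (a * c) (b * c) = dist a b)
    (τ : G →* H) (hτ_inj : Function.Injective τ) (hτ_dense : DenseRange τ)
    (W : Set H)
    (h_proper : W = closure (interior W))
    (h_irred : ∀ ξ : H, (fun w => w * ξ) '' W = W → ξ = 1)
    (β : (G → Bool) → H)
    (hβ_cont : ContinuousOn β (closure (shiftOrbit (modelSet (⇑τ) W))))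
    (hβ_equiv : ∀ g : G, ∀ y ∈ closure (shiftOrbit (modelSet (⇑τ) W)),
      β (shift g y) = τ g * β y)
    (hβ_one : β (modelSet (⇑τ) W) = 1)
    (ξ : H)
    (Sm Sp : Set (Set H))
    (h_disj : Disjoint Sm Sp)
    (h_cover : Sm ∪ Sp = {S : Set H | isSimClass (⇑τ) W ξ S})
    (h_case :
      (Sp = ∅ ∧ ∃ S₁ ∈ Sm, ∀ S ∈ Sm, classLe W ξ S S₁) ∨
      (Sm = ∅ ∧ ∃ S₂ ∈ Sp, ∀ S ∈ Sp, classLe W ξ S₂ S) ∨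
      (∃ S₁ ∈ Sm, ∃ S₂ ∈ Sp,
        (∀ S ∈ Sm, classLe W ξ S S₁) ∧ (∀ S ∈ Sp, classLe W ξ S₂ S) ∧
        classLe W ξ S₁ S₂ ∧ S₁ ≠ S₂))
    (x : G → Bool)
    (hx : ∀ g : G, x g = true ↔
      τ g ∈ (fun w => w * ξ⁻¹) '' interior W ∪ ⋃ S ∈ Sp, S) :
    x ∈ closure (shiftOrbit (modelSet (⇑τ) W)) ∧ β x = ξ := by
  classical
  set A : Set H := (fun w => w * ξ⁻¹) '' W with hA
  have hcoe : ⇑(Homeomorph.mulRight ξ⁻¹) = fun w : H => w * ξ⁻¹ := rfl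
  have hA_eq : A = closure (interior A) := by
    rw [hA]
    conv_lhs => rw [h_proper]
    rw [← hcoe, (Homeomorph.mulRight ξ⁻¹).image_closure,
      (Homeomorph.mulRight ξ⁻¹).image_interior]
  have hA_closed : IsClosed A := by rw [hA_eq]; exact isClosed_closure
  have h_int : (fun w : H => w * ξ⁻¹) '' interior W = interior A := by
    rw [hA, ← hcoe, (Homeomorph.mulRight ξ⁻¹).image_interior]
  have h_front : frontier A = A \ interior A := by
    rw [frontier, hA_closed.closure_eq]
  have hsc : ∀ S, S ∈ Sm ∪ Sp → isSimClass (⇑τ) W ξ S := by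
    intro S hS
    rw [h_cover] at hS
    exact hS
  -- density of τ(G)·ξ⁻¹
  have density : ∀ V : Set H, IsOpen V → V.Nonempty →
      ∃ ζ₀ ∈ V, ∃ g : G, τ g = ζ₀ * ξ := by
    rintro V hV ⟨v, hv⟩
    have hV' : IsOpen ((fun w : H => w * ξ) '' V) := by
      rw [show (fun w : H => w * ξ) = ⇑(Homeomorph.mulRight ξ) from rfl]
      exact (Homeomorph.mulRight ξ).isOpenMap V hV
    obtain ⟨g, hg⟩ := hτ_dense.exists_mem_open hV' ⟨v * ξ, ⟨v, hv, rfl⟩⟩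
    obtain ⟨ζ₀, hζ₀, he⟩ := hg
    exact ⟨ζ₀, hζ₀, g, he.symm⟩
  -- generic approximation inside open sets of group elements
  have approx : ∀ (u w₀ : H) (B U : Set H), IsOpen U → w₀ ∈ U → u * w₀ ∈ closure B →
      ∃ ζ₀ ∈ U, u * ζ₀ ∈ B := by
    intro u w₀ B U hU hw₀ hcl
    have ho : IsOpen ((fun w : H => u⁻¹ * w) ⁻¹' U) :=
      hU.preimage (continuous_const.mul continuous_id)
    have hmem : u * w₀ ∈ (fun w : H => u⁻¹ * w) ⁻¹' U := by
      show u⁻¹ * (u * w₀) ∈ U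
      rwa [inv_mul_cancel_left]
    obtain ⟨w, hwU, hwB⟩ := mem_closure_iff.1 hcl _ ho hmem
    refine ⟨u⁻¹ * w, hwU, ?_⟩
    rwa [mul_inv_cancel_left]
  have evd : ∀ ζ : ℕ → H, (∀ n : ℕ, dist (ζ n) 1 < 1 / (n + 1)) →
      ∀ ε > (0:ℝ), ∀ᶠ n in Filter.atTop, dist (ζ n) 1 < ε := by
    intro ζ h ε hε
    obtain ⟨N, hN⟩ := exists_nat_one_div_lt hε
    filter_upwards [Filter.eventually_ge_atTop N] with n hn
    have h2 : (1:ℝ) / (n + 1) ≤ 1 / (N + 1) := by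
      apply one_div_le_one_div_of_le (by positivity)
      exact_mod_cast Nat.succ_le_succ hn
    exact (h n).trans_le (h2.trans hN.le)
  have choose_seq : ∀ P : H → Prop,
      (∀ ε > (0:ℝ), ∃ ζ₀, dist ζ₀ 1 < ε ∧ (∃ g : G, τ g = ζ₀ * ξ) ∧ P ζ₀) →
      ∃ (ζ : ℕ → H) (g : ℕ → G), ∀ n : ℕ,
        dist (ζ n) 1 < 1 / (n + 1) ∧ τ (g n) = ζ n * ξ ∧ P (ζ n) := by
    intro P h
    have h' : ∀ n : ℕ, ∃ ζ₀, ∃ g : G,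
        dist ζ₀ 1 < 1 / (n + 1) ∧ τ g = ζ₀ * ξ ∧ P ζ₀ := by
      intro n
      obtain ⟨ζ₀, h1, ⟨g, h2⟩, h3⟩ := h (1 / (n + 1)) (by positivity)
      exact ⟨ζ₀, g, h1, h2, h3⟩
    choose ζ g hg using h'
    exact ⟨ζ, g, hg⟩
  -- the key sequence
  obtain ⟨ζ, g, hgτ, hζd, hζP, hζM⟩ :
      ∃ (ζ : ℕ → H) (g : ℕ → G),
        (∀ n, τ (g n) = ζ n * ξ) ∧
        (∀ n : ℕ, dist (ζ n) 1 < 1 / (n + 1)) ∧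
        (∀ S ∈ Sp, ∀ s ∈ S, ∀ᶠ n in Filter.atTop, s * ζ n ∈ A) ∧
        (∀ S ∈ Sm, ∀ s ∈ S, ∀ᶠ n in Filter.atTop, s * ζ n ∉ A) := by
    rcases h_case with ⟨hSpE, S₁, hS₁m, hmax⟩ | ⟨hSmE, S₂, hS₂p, hmin⟩ |
        ⟨S₁, hS₁m, S₂, hS₂p, hmax, hmin, hle, hne⟩
    · -- case (a)
      have hS₁c := hsc S₁ (Or.inl hS₁m)
      obtain ⟨s₁, hs₁S, hs₁F⟩ := simClass_mem hS₁c
      have hs₁cl : s₁ * 1 ∈ closure Aᶜ := by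
        rw [mul_one]
        have h1 : s₁ ∈ frontier A := hs₁F.1
        rw [frontier_eq_closure_inter_closure] at h1
        exact h1.2
      have hex : ∀ ε > (0:ℝ), ∃ ζ₀, dist ζ₀ 1 < ε ∧ (∃ g : G, τ g = ζ₀ * ξ) ∧
          s₁ * ζ₀ ∉ A := by
        intro ε hε
        have hVo : IsOpen (Metric.ball (1:H) ε ∩ (fun ζ => s₁ * ζ) ⁻¹' Aᶜ) :=
          Metric.isOpen_ball.inter
            (hA_closed.isOpen_compl.preimage (continuous_const.mul continuous_id))
        obtain ⟨ζ₀, hζ₀U, hζ₀c⟩ := approx s₁ 1 Aᶜ (Metric.ball 1 ε) Metric.isOpen_ball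
          (by simp [hε]) hs₁cl
        obtain ⟨ζ₁, hζ₁V, hg⟩ := density _ hVo ⟨ζ₀, hζ₀U, hζ₀c⟩
        exact ⟨ζ₁, by simpa [Metric.mem_ball] using hζ₁V.1, hg, hζ₁V.2⟩
      obtain ⟨ζ, g, hζg⟩ := choose_seq _ hex
      refine ⟨ζ, g, fun n => (hζg n).2.1, fun n => (hζg n).1, ?_, ?_⟩
      · intro S hS
        rw [hSpE] at hS
        exact absurd hS (Set.notMem_empty S)
      · intro S hS s hs
        have hss : precEq W ξ s s₁ := hmax S hS s hs s₁ hs₁S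
        obtain ⟨ε, hε, himp⟩ := (precEq_iff hd_bi).1 hss
        filter_upwards [evd ζ (fun n => (hζg n).1) ε hε] with n hn hc
        exact (hζg n).2.2 (himp (ζ n) hn hc)
    · -- case (b)
      have hS₂c := hsc S₂ (Or.inr hS₂p)
      obtain ⟨t, htS, htF⟩ := simClass_mem hS₂c
      have htcl : t * 1 ∈ closure (interior A) := by
        rw [mul_one, ← hA_eq]
        exact hA_closed.closure_eq ▸ frontier_subset_closure htF.1
      have hex : ∀ ε > (0:ℝ), ∃ ζ₀, dist ζ₀ 1 < ε ∧ (∃ g : G, τ g = ζ₀ * ξ) ∧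
          t * ζ₀ ∈ A := by
        intro ε hε
        have hVo : IsOpen (Metric.ball (1:H) ε ∩ (fun ζ => t * ζ) ⁻¹' interior A) :=
          Metric.isOpen_ball.inter
            (isOpen_interior.preimage (continuous_const.mul continuous_id))
        obtain ⟨ζ₀, hζ₀U, hζ₀c⟩ := approx t 1 (interior A) (Metric.ball 1 ε)
          Metric.isOpen_ball (by simp [hε]) htcl
        obtain ⟨ζ₁, hζ₁V, hg⟩ := density _ hVo ⟨ζ₀, hζ₀U, hζ₀c⟩
        exact ⟨ζ₁, by simpa [Metric.mem_ball] using hζ₁V.1, hg, interior_subset hζ₁V.2⟩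
      obtain ⟨ζ, g, hζg⟩ := choose_seq _ hex
      refine ⟨ζ, g, fun n => (hζg n).2.1, fun n => (hζg n).1, ?_, ?_⟩
      · intro S hS s hs
        have hts : precEq W ξ t s := hmin S hS t htS s hs
        obtain ⟨ε, hε, himp⟩ := (precEq_iff hd_bi).1 hts
        filter_upwards [evd ζ (fun n => (hζg n).1) ε hε] with n hn
        exact himp (ζ n) hn (hζg n).2.2
      · intro S hS
        rw [hSmE] at hS
        exact absurd hS (Set.notMem_empty S)
    · -- case (c)
      have hS₁c := hsc S₁ (Or.inl hS₁m)
      have hS₂c := hsc S₂ (Or.inr hS₂p)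
      obtain ⟨s₁, hs₁S, hs₁F⟩ := simClass_mem hS₁c
      obtain ⟨t, htS, htF⟩ := simClass_mem hS₂c
      have hnp : ¬ precEq W ξ t s₁ := by
        intro hts
        have hst : precEq W ξ s₁ t := hle s₁ hs₁S t htS
        have hs₁S₂ : s₁ ∈ S₂ := by
          obtain ⟨b, hb, hS₂def⟩ := hS₂c
          rw [hS₂def] at htS ⊢
          exact ⟨hs₁F, simEq_trans hd_bi ⟨hst, hts⟩ htS.2⟩
        exact hne (class_eq hd_bi hS₁c hS₂c hs₁S hs₁S₂)
      have hex : ∀ ε > (0:ℝ), ∃ ζ₀, dist ζ₀ 1 < ε ∧ (∃ g : G, τ g = ζ₀ * ξ) ∧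
          (t * ζ₀ ∈ A ∧ s₁ * ζ₀ ∉ A) := by
        intro ε hε
        obtain ⟨η, hη1, hηt, hηs⟩ := not_precEq hd_bi hnp ε hε
        have hUo : IsOpen (Metric.ball (1:H) ε ∩ (fun ζ => s₁ * ζ) ⁻¹' Aᶜ) :=
          Metric.isOpen_ball.inter
            (hA_closed.isOpen_compl.preimage (continuous_const.mul continuous_id))
        have hηU : η ∈ Metric.ball (1:H) ε ∩ (fun ζ => s₁ * ζ) ⁻¹' Aᶜ :=
          ⟨by rwa [Metric.mem_ball], hηs⟩
        have hclosA : t * η ∈ closure (interior A) := by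
          rw [← hA_eq]; exact hηt
        obtain ⟨ζ₀, hζ₀U, hζ₀i⟩ := approx t η (interior A) _ hUo hηU hclosA
        have hVo : IsOpen ((Metric.ball (1:H) ε ∩ (fun ζ => s₁ * ζ) ⁻¹' Aᶜ) ∩
            (fun ζ => t * ζ) ⁻¹' interior A) :=
          hUo.inter (isOpen_interior.preimage (continuous_const.mul continuous_id))
        obtain ⟨ζ₁, hζ₁V, hg⟩ := density _ hVo ⟨ζ₀, hζ₀U, hζ₀i⟩
        exact ⟨ζ₁, by simpa [Metric.mem_ball] using hζ₁V.1.1, hg,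
          interior_subset hζ₁V.2, hζ₁V.1.2⟩
      obtain ⟨ζ, g, hζg⟩ := choose_seq _ hex
      refine ⟨ζ, g, fun n => (hζg n).2.1, fun n => (hζg n).1, ?_, ?_⟩
      · intro S hS s hs
        have hts : precEq W ξ t s := hmin S hS t htS s hs
        obtain ⟨ε, hε, himp⟩ := (precEq_iff hd_bi).1 hts
        filter_upwards [evd ζ (fun n => (hζg n).1) ε hε] with n hn
        exact himp (ζ n) hn (hζg n).2.2.1
      · intro S hS s hs
        have hss : precEq W ξ s s₁ := hmax S hS s hs s₁ hs₁S
        obtain ⟨ε, hε, himp⟩ := (precEq_iff hd_bi).1 hss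
        filter_upwards [evd ζ (fun n => (hζg n).1) ε hε] with n hn hc
        exact (hζg n).2.2.2 (himp (ζ n) hn hc)
  -- from here on, the common argument
  have hd' : ∀ ε > (0:ℝ), ∀ᶠ n in Filter.atTop, dist (ζ n) 1 < ε := evd ζ hζd
  have hζ_t : Filter.Tendsto ζ Filter.atTop (𝓝 1) := by
    rw [Metric.tendsto_atTop]
    intro ε hε
    exact Filter.eventually_atTop.1 (hd' ε hε)
  have hxW : modelSet (⇑τ) W ∈ closure (shiftOrbit (modelSet (⇑τ) W)) := by
    apply subset_closure
    exact ⟨1, by funext h; simp [shift]⟩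
  set y : ℕ → (G → Bool) := fun n => shift (g n) (modelSet (⇑τ) W) with hy
  have hyval : ∀ n (h : G), y n h = true ↔ τ h * ζ n ∈ A := by
    intro n h
    have hmem : τ (h * g n) ∈ W ↔ τ h * ζ n ∈ A := by
      rw [map_mul, hgτ n, ← mul_assoc]
      exact mem_tr.symm
    show (if τ (h * g n) ∈ W then true else false) = true ↔ τ h * ζ n ∈ A
    rw [← hmem]
    by_cases hc : τ (h * g n) ∈ W
    · rw [if_pos hc]
      exact iff_of_true rfl hc
    · rw [if_neg hc]
      exact iff_of_false Bool.false_ne_true hc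
  have hfalse : ∀ n (h : G), τ h * ζ n ∉ A → y n h = false := by
    intro n h hn
    cases hv : y n h
    · rfl
    · exact absurd ((hyval n h).1 hv) hn
  have hconv : ∀ h : G, ∀ᶠ n in Filter.atTop, y n h = x h := by
    intro h
    by_cases h1 : τ h ∈ interior A
    · have hx1 : x h = true := (hx h).2 (Or.inl (by rw [h_int]; exact h1))
      obtain ⟨ε, hε, hball⟩ := Metric.isOpen_iff.1 isOpen_interior (τ h) h1
      filter_upwards [hd' ε hε] with n hn
      have hb : τ h * ζ n ∈ Metric.ball (τ h) ε := by
        rw [Metric.mem_ball, dist_mul_one hd_bi]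
        exact hn
      rw [hx1]
      exact (hyval n h).2 (interior_subset (hball hb))
    · by_cases h2 : τ h ∈ A
      · have hF : τ h ∈ frontier A := by rw [h_front]; exact ⟨h2, h1⟩
        have hS₀c : isSimClass (⇑τ) W ξ
            {u ∈ frontier A ∩ Set.range (⇑τ) | simEq W ξ u (τ h)} :=
          ⟨τ h, ⟨hF, ⟨h, rfl⟩⟩, rfl⟩
        have hs₀ : τ h ∈ {u ∈ frontier A ∩ Set.range (⇑τ) | simEq W ξ u (τ h)} :=
          ⟨⟨hF, ⟨h, rfl⟩⟩, simEq_refl⟩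
        have hmemS : {u ∈ frontier A ∩ Set.range (⇑τ) | simEq W ξ u (τ h)} ∈ Sm ∪ Sp := by
          rw [h_cover]
          exact hS₀c
        rcases hmemS with hm | hp
        · have hx0 : x h = false := by
            rcases Bool.eq_false_or_eq_true (x h) with h1' | h0
            swap
            · exact h0
            exfalso
            rcases (hx h).1 h1' with hin | hun
            · exact h1 (by rw [← h_int]; exact hin)
            · rw [Set.mem_iUnion₂] at hun
              obtain ⟨S', hS'p, hτhS'⟩ := hun
              have hS'c := hsc S' (Or.inr hS'p)
              have heq := class_eq hd_bi hS₀c hS'c hs₀ hτhS'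
              rw [← heq] at hS'p
              exact (Set.disjoint_left.1 h_disj hm) hS'p
          filter_upwards [hζM _ hm (τ h) hs₀] with n hn
          rw [hx0]
          exact hfalse n h hn
        · have hx1 : x h = true := (hx h).2 (Or.inr (Set.mem_biUnion hp hs₀))
          filter_upwards [hζP _ hp (τ h) hs₀] with n hn
          rw [hx1]
          exact (hyval n h).2 hn
      · have hx0 : x h = false := by
          rcases Bool.eq_false_or_eq_true (x h) with h1' | h0
          swap
          · exact h0
          exfalso
          rcases (hx h).1 h1' with hin | hun
          · exact h2 (interior_subset (by rw [← h_int]; exact hin))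
          · rw [Set.mem_iUnion₂] at hun
            obtain ⟨S', hS'p, hτhS'⟩ := hun
            have hS'c := hsc S' (Or.inr hS'p)
            have hfr : τ h ∈ frontier A := (simClass_subset hS'c hτhS').1
            exact h2 (h_front ▸ hfr).1
        obtain ⟨ε, hε, hball⟩ := Metric.isOpen_iff.1 hA_closed.isOpen_compl (τ h) h2
        filter_upwards [hd' ε hε] with n hn
        have hb : τ h * ζ n ∈ Metric.ball (τ h) ε := by
          rw [Metric.mem_ball, dist_mul_one hd_bi]
          exact hn
        rw [hx0]
        exact hfalse n h (hball hb)
  have hy_tendsto : Filter.Tendsto y Filter.atTop (𝓝 x) := by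
    rw [tendsto_pi_nhds]
    intro h
    exact tendsto_const_nhds.congr' ((hconv h).mono fun n e => e.symm)
  have hy_mem : ∀ n, y n ∈ shiftOrbit (modelSet (⇑τ) W) := fun n => ⟨g n, rfl⟩
  have hx_cl : x ∈ closure (shiftOrbit (modelSet (⇑τ) W)) :=
    mem_closure_of_tendsto hy_tendsto (Filter.Eventually.of_forall hy_mem)
  refine ⟨hx_cl, ?_⟩
  have hβy : ∀ n, β (y n) = ζ n * ξ := by
    intro n
    show β (shift (g n) (modelSet (⇑τ) W)) = ζ n * ξ
    rw [hβ_equiv (g n) _ hxW, hβ_one, mul_one, hgτ n]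
  have hl1 : Filter.Tendsto (fun n => β (y n)) Filter.atTop (𝓝 ξ) := by
    have h0 : Filter.Tendsto (fun n => ζ n * ξ) Filter.atTop (𝓝 ξ) := by
      have := hζ_t.mul (tendsto_const_nhds (x := ξ))
      rwa [one_mul] at this
    exact h0.congr fun n => (hβy n).symm
  have hl2 : Filter.Tendsto (fun n => β (y n)) Filter.atTop (𝓝 (β x)) := by
    have hyt : Filter.Tendsto y Filter.atTop
        (𝓝[closure (shiftOrbit (modelSet (⇑τ) W))] x) :=
      tendsto_nhdsWithin_of_tendsto_nhds_of_eventually_within _ hy_tendsto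
        (Filter.Eventually.of_forall fun n => subset_closure (hy_mem n))
    exact Filter.Tendsto.comp (hβ_cont x hx_cl) hyt
  exact tendsto_nhds_unique hl2 hl1
end

section
/- Let W ⊆ H be a proper, irredundant window, β : closure(O_G(x_W)) → H a continuous G-equivariant map with β(x_W) = 1_H, ξ ∈ H, and k ≥ 1. Suppose S₁, …, S_k are nonempty, pairwise disjoint sets with S₁ ∪ ⋯ ∪ S_k = frontier(W·ξ⁻¹) ∩ τ(G), such that each S_i is a ∼_ξ-equivalence class and s ≺_ξ t whenever s ∈ S_i, t ∈ S_j with i < j. For j = 1, …, k+1 define x_j ∈ {0,1}^G by x_j(g) = 1 ⟺ τ(g) ∈ interior(W)·ξ⁻¹ ∪ S_j ∪ ⋯ ∪ S_k (the union S_j ∪ ⋯ ∪ S_k being empty for j = k+1). Then {x ∈ closure(O_G(x_W)) : β(x) = ξ} = {x₁, …, x_{k+1}}, and x₁, …, x_{k+1} are pairwise distinct; in particular this fiber has exactly k+1 elements. -/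
open Topology Set

lemma my_exists_pos_forall_finset {α : Type*} (F : Finset α) (P : α → ℝ → Prop)
    (mono : ∀ a, ∀ ε ε' : ℝ, ε' ≤ ε → P a ε → P a ε')
    (h : ∀ a ∈ F, ∃ ε > 0, P a ε) : ∃ ε > 0, ∀ a ∈ F, P a ε := by
  classical
  induction F using Finset.induction_on with
  | empty => exact ⟨1, one_pos, by simp⟩
  | @insert a F hnot ih =>
    obtain ⟨ε₁, hε₁, hP₁⟩ := h _ (Finset.mem_insert_self _ _)
    obtain ⟨ε₂, hε₂, hP₂⟩ := ih (fun b hb => h b (Finset.mem_insert_of_mem hb))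
    refine ⟨min ε₁ ε₂, lt_min hε₁ hε₂, ?_⟩
    intro b hb
    rcases Finset.mem_insert.1 hb with rfl | hb
    · exact mono _ _ _ (min_le_left _ _) hP₁
    · exact mono _ _ _ (min_le_right _ _) (hP₂ b hb)

lemma my_tendsto_discrete {α β : Type*} [TopologicalSpace β] [DiscreteTopology β]
    {f : α → β} {l : Filter α} {b : β} :
    Filter.Tendsto f l (nhds b) ↔ ∀ᶠ x in l, f x = b := by
  rw [nhds_discrete, Filter.tendsto_pure]

open Filter

/-- if the similarity classes w.r.t. `ξ` are exactly the strictly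
ordered nonempty classes `S 0 ≺_ξ ⋯ ≺_ξ S (k-1)`, then the fiber of `β` over
`ξ` consists exactly of the `k+1` pairwise distinct arrays `x j`
(`j = 0, …, k`), where `x j (g) = 1 ⟺ τ(g) ∈ int(W)ξ⁻¹ ∪ S j ∪ ⋯ ∪ S (k-1)`. -/
theorem statement12
    {G : Type*} [Group G] [Countable G]
    {H : Type*} [Group H] [MetricSpace H] [IsTopologicalGroup H] [CompactSpace H]
    (hd_bi : ∀ a b c : H, dist (c * a) (c * b) = dist a b ∧ dist (a * c) (b * c) = dist a b)
    (τ : G →* H) (hτ_inj : Function.Injective τ) (hτ_dense : DenseRange τ)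
    (W : Set H)
    (h_proper : W = closure (interior W))
    (h_irred : ∀ ξ : H, (fun w => w * ξ) '' W = W → ξ = 1)
    (β : (G → Bool) → H)
    (hβ_cont : ContinuousOn β (closure (shiftOrbit (modelSet (⇑τ) W))))
    (hβ_equiv : ∀ g : G, ∀ y ∈ closure (shiftOrbit (modelSet (⇑τ) W)),
      β (shift g y) = τ g * β y)
    (hβ_one : β (modelSet (⇑τ) W) = 1)
    (ξ : H) (k : ℕ) (hk : 1 ≤ k)
    (S : Fin k → Set H)
    (hS_ne : ∀ i, (S i).Nonempty)
    (hS_disj : ∀ i j, i ≠ j → Disjoint (S i) (S j))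
    (hS_union : (⋃ i, S i) = frontier ((fun w => w * ξ⁻¹) '' W) ∩ Set.range τ)
    (hS_class : ∀ i, isSimClass (⇑τ) W ξ (S i))
    (hS_order : ∀ i j : Fin k, i < j → ∀ s ∈ S i, ∀ t ∈ S j,
      precEq W ξ s t ∧ ¬ precEq W ξ t s)
    (x : Fin (k + 1) → G → Bool)
    (hx : ∀ (j : Fin (k + 1)) (g : G), x j g = true ↔
      τ g ∈ (fun w => w * ξ⁻¹) '' interior W ∪
        ⋃ i : Fin k, ⋃ (_ : (j : ℕ) ≤ (i : ℕ)), S i) :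
    {y ∈ closure (shiftOrbit (modelSet (⇑τ) W)) | β y = ξ} = Set.range x ∧
    Function.Injective x ∧
    {y ∈ closure (shiftOrbit (modelSet (⇑τ) W)) | β y = ξ}.ncard = k + 1 := by
  classical
  set A : Set H := (fun w => w * ξ⁻¹) '' W with hA_def
  set m : G → Bool := modelSet (⇑τ) W with hm_def
  set Y : Set (G → Bool) := closure (shiftOrbit m) with hY_def
  have dL : ∀ (c a b : H), dist (c * a) (c * b) = dist a b := fun c a b => (hd_bi a b c).1
  have dR : ∀ (c a b : H), dist (a * c) (b * c) = dist a b := fun c a b => (hd_bi a b c).2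
  have hW_closed : IsClosed W := by rw [h_proper]; exact isClosed_closure
  have hAW : ∀ v : H, v ∈ A ↔ v * ξ ∈ W := by
    intro v
    constructor
    · rintro ⟨w, hw, rfl⟩; simpa using hw
    · intro hv; exact ⟨v * ξ, hv, by simp⟩
  have hA_eq : A = (Homeomorph.mulRight ξ⁻¹) '' W := rfl
  have hA_closed : IsClosed A := by
    rw [hA_eq]; exact (Homeomorph.mulRight ξ⁻¹).isClosedMap W hW_closed
  have hA_int : interior A = (fun w => w * ξ⁻¹) '' interior W := by
    rw [hA_eq, ← Homeomorph.image_interior]; rfl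
  have hA_reg : A = closure (interior A) := by
    rw [hA_int]
    calc A = (Homeomorph.mulRight ξ⁻¹) '' (closure (interior W)) := by
            rw [hA_eq, ← h_proper]
      _ = closure ((Homeomorph.mulRight ξ⁻¹) '' (interior W)) :=
            Homeomorph.image_closure _ _
      _ = closure ((fun w => w * ξ⁻¹) '' interior W) := rfl
  have hfr_subA : frontier A ⊆ A := by
    rw [hA_closed.frontier_eq]; exact diff_subset
  have hfr_int : ∀ v : H, v ∈ frontier A → v ∉ interior A := by
    intro v hv
    rw [hA_closed.frontier_eq] at hv; exact hv.2
  have hint_subA : interior A ⊆ A := interior_subset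
  -- precEq characterization
  have himg : ∀ (u : H) (ε : ℝ),
      (fun w => u⁻¹ * w) '' (Metric.ball u ε ∩ A) = {η : H | dist η 1 < ε ∧ u * η ∈ A} := by
    intro u ε
    ext η
    constructor
    · rintro ⟨w, ⟨hb, hw⟩, rfl⟩
      constructor
      · have h1 : dist (u⁻¹ * w) (u⁻¹ * u) = dist w u := dL _ _ _
        rw [inv_mul_cancel] at h1
        rw [h1]
        exact Metric.mem_ball.mp hb
      · show u * (u⁻¹ * w) ∈ A
        rwa [mul_inv_cancel_left]
    · rintro ⟨h1, h2⟩
      refine ⟨u * η, ⟨?_, h2⟩, by simp⟩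
      rw [Metric.mem_ball]
      have h3 : dist (u * η) (u * 1) = dist η 1 := dL _ _ _
      rw [mul_one] at h3
      rw [h3]
      exact h1
  have hprec : ∀ s t : H, precEq W ξ s t ↔
      ∃ ε > (0:ℝ), ∀ η : H, dist η 1 < ε → s * η ∈ A → t * η ∈ A := by
    intro s t
    unfold precEq
    rw [← hA_def]
    refine exists_congr fun ε => and_congr_right fun hε => ?_
    rw [himg, himg]
    constructor
    · intro hsub η hd hs
      exact (hsub ⟨hd, hs⟩).2
    · rintro h η ⟨h1, h2⟩
      exact ⟨h1, h η h1 h2⟩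
  have hprec_trans : ∀ s t u : H, precEq W ξ s t → precEq W ξ t u → precEq W ξ s u := by
    intro s t u h1 h2
    rw [hprec] at h1 h2 ⊢
    obtain ⟨ε₁, hε₁, H1⟩ := h1
    obtain ⟨ε₂, hε₂, H2⟩ := h2
    exact ⟨min ε₁ ε₂, lt_min hε₁ hε₂, fun η hd hs =>
      H2 η (lt_of_lt_of_le hd (min_le_right _ _)) (H1 η (lt_of_lt_of_le hd (min_le_left _ _)) hs)⟩
  have hS_fr : ∀ i : Fin k, S i ⊆ frontier A ∩ range ⇑τ := by
    intro i
    rw [← hS_union]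
    exact subset_iUnion S i
  have hsame : ∀ i : Fin k, ∀ s ∈ S i, ∀ t ∈ S i, precEq W ξ s t := by
    intro i s hs t ht
    obtain ⟨s₀, hs₀, hSeq⟩ := hS_class i
    rw [hSeq] at hs ht
    exact hprec_trans _ _ _ hs.2.1 ht.2.2
  have hle : ∀ (i i' : Fin k), i ≤ i' → ∀ s ∈ S i, ∀ t ∈ S i', precEq W ξ s t := by
    intro i i' hii s hs t ht
    rcases lt_or_eq_of_le hii with h | h
    · exact (hS_order i i' h s hs t ht).1
    · subst h; exact hsame i s hs t ht
  have huniq : ∀ (v : H) (i i' : Fin k), v ∈ S i → v ∈ S i' → i = i' := by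
    intro v i i' hi hi'
    by_contra hne
    exact Set.disjoint_left.mp (hS_disj i i' hne) hi hi'
  have hmemS : ∀ v : H, v ∈ frontier A → v ∈ range ⇑τ → ∃ i : Fin k, v ∈ S i := by
    intro v h1 h2
    have hv : v ∈ ⋃ i, S i := by rw [hS_union]; exact ⟨h1, h2⟩
    exact mem_iUnion.mp hv
  have hxval : ∀ (j : Fin (k+1)) (g : G), x j g = true ↔
      (τ g ∈ interior A ∨ ∃ i : Fin k, (j:ℕ) ≤ (i:ℕ) ∧ τ g ∈ S i) := by
    intro j g
    rw [hx j g, ← hA_int]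
    simp [mem_union, mem_iUnion]
  have hshift : ∀ (g h : G), shift g m h = true ↔ τ h * (τ g * ξ⁻¹) ∈ A := by
    intro g h
    have hmul : τ h * (τ g * ξ⁻¹) * ξ = τ (h * g) := by
      rw [map_mul]; simp [mul_assoc]
    rw [hAW, hmul]
    show m (h * g) = true ↔ τ (h * g) ∈ W
    rw [hm_def]
    by_cases hW : τ (h * g) ∈ W <;> simp [modelSet, hW]
  have hm_orbit : m ∈ shiftOrbit m := ⟨1, funext fun h => by simp [shift]⟩
  have hm_Y : m ∈ Y := subset_closure hm_orbit
  have hβ_shift : ∀ g : G, β (shift g m) = τ g := by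
    intro g; rw [hβ_equiv g m hm_Y, hβ_one, mul_one]
  -- KEY APPROXIMATION LEMMA
  have key : ∀ (j : Fin (k+1)) (δ : ℝ), 0 < δ → ∀ (F₀ : Finset G), ∃ g : G,
      dist (τ g) ξ < δ ∧ ∀ h ∈ F₀, shift g m h = x j h := by
    intro j δ hδ F₀
    have hjm : (j:ℕ) ≤ k := Nat.lt_succ_iff.mp j.2
    obtain ⟨sstar, hsstar⟩ : ∃ s : H, ∀ hjk : (j:ℕ) < k, s ∈ S ⟨j, hjk⟩ := by
      by_cases hjk : (j:ℕ) < k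
      · exact ⟨(hS_ne ⟨j, hjk⟩).choose, fun _ => (hS_ne ⟨j, hjk⟩).choose_spec⟩
      · exact ⟨1, fun h => absurd h hjk⟩
    obtain ⟨tmax, htmax⟩ : ∃ t : H, ∀ _ : 0 < (j:ℕ), t ∈ S ⟨(j:ℕ) - 1, by omega⟩ := by
      by_cases hj0 : 0 < (j:ℕ)
      · exact ⟨(hS_ne ⟨(j:ℕ)-1, by omega⟩).choose, fun _ => (hS_ne ⟨(j:ℕ)-1, by omega⟩).choose_spec⟩
      · exact ⟨1, fun h => absurd h hj0⟩
    set P : G → ℝ → Prop := fun h ε => ∀ η : H, dist η 1 < ε →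
        ((τ h ∈ interior A → τ h * η ∈ A) ∧
         (τ h ∉ A → τ h * η ∉ A) ∧
         (∀ i : Fin k, τ h ∈ S i → (j:ℕ) ≤ (i:ℕ) → sstar * η ∈ A → τ h * η ∈ A) ∧
         (∀ i : Fin k, τ h ∈ S i → (i:ℕ) < (j:ℕ) → τ h * η ∈ A → tmax * η ∈ A)) with hP_def
    have hmono : ∀ a, ∀ ε ε' : ℝ, ε' ≤ ε → P a ε → P a ε' :=
      fun a ε ε' hle' hP η hd => hP η (lt_of_lt_of_le hd hle')
    have hPex : ∀ h ∈ F₀, ∃ ε > (0:ℝ), P h ε := by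
      intro h _
      by_cases hint : τ h ∈ interior A
      · have hopen : IsOpen {η : H | τ h * η ∈ interior A} :=
          isOpen_interior.preimage (continuous_mul_left (τ h))
        have h1 : (1:H) ∈ {η : H | τ h * η ∈ interior A} := by simpa using hint
        obtain ⟨ε, hε, hball⟩ := Metric.isOpen_iff.mp hopen 1 h1
        refine ⟨ε, hε, fun η hd => ?_⟩
        have hmem : τ h * η ∈ interior A := hball (by rwa [Metric.mem_ball])
        exact ⟨fun _ => hint_subA hmem, fun hno => absurd (hint_subA hint) hno,
          fun i hi _ _ => hint_subA hmem,
          fun i hi _ _ => absurd hint (hfr_int _ ((hS_fr i hi).1))⟩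
      · by_cases hA' : τ h ∈ A
        · have hfr : τ h ∈ frontier A := by rw [hA_closed.frontier_eq]; exact ⟨hA', hint⟩
          obtain ⟨i₀, hi₀⟩ := hmemS (τ h) hfr ⟨h, rfl⟩
          by_cases hge : (j:ℕ) ≤ (i₀:ℕ)
          · have hjk : (j:ℕ) < k := lt_of_le_of_lt hge i₀.2
            have hsS : sstar ∈ S ⟨j, hjk⟩ := hsstar hjk
            have hpr : precEq W ξ sstar (τ h) :=
              hle ⟨j, hjk⟩ i₀ (by rw [Fin.le_def]; exact hge) _ hsS _ hi₀
            obtain ⟨ε, hε, himp⟩ := (hprec _ _).mp hpr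
            refine ⟨ε, hε, fun η hd => ⟨fun hi => absurd hi hint,
              fun hno => absurd hA' hno, ?_, ?_⟩⟩
            · intro i hi _ hsA
              exact himp η hd hsA
            · intro i hi hlt _
              have hii : i = i₀ := huniq _ i i₀ hi hi₀
              rw [hii] at hlt
              omega
          · have hj0 : 0 < (j:ℕ) := by omega
            have htS : tmax ∈ S ⟨(j:ℕ)-1, by omega⟩ := htmax hj0
            have hpr : precEq W ξ (τ h) tmax :=
              hle i₀ ⟨(j:ℕ)-1, by omega⟩ (by rw [Fin.le_def]; simp; omega) _ hi₀ _ htS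
            obtain ⟨ε, hε, himp⟩ := (hprec _ _).mp hpr
            refine ⟨ε, hε, fun η hd => ⟨fun hi => absurd hi hint,
              fun hno => absurd hA' hno, ?_, ?_⟩⟩
            · intro i hi hge' _
              have hii : i = i₀ := huniq _ i i₀ hi hi₀
              rw [hii] at hge'
              omega
            · intro i hi _ hA''
              exact himp η hd hA''
        · have hopen : IsOpen {η : H | τ h * η ∈ Aᶜ} :=
            hA_closed.isOpen_compl.preimage (continuous_mul_left (τ h))
          have h1 : (1:H) ∈ {η : H | τ h * η ∈ Aᶜ} := by simpa using hA'
          obtain ⟨ε, hε, hball⟩ := Metric.isOpen_iff.mp hopen 1 h1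
          refine ⟨ε, hε, fun η hd => ?_⟩
          have hmem : τ h * η ∉ A := hball (by rwa [Metric.mem_ball])
          exact ⟨fun hi => absurd (hint_subA hi) hA', fun _ => hmem,
            fun i hi _ _ => (hA' (hfr_subA (hS_fr i hi).1)).elim,
            fun i hi _ hcon => absurd hcon hmem⟩
    obtain ⟨ε₀, hε₀, hP⟩ := my_exists_pos_forall_finset F₀ P hmono hPex
    set ε' : ℝ := min ε₀ δ with hε'_def
    have hε' : 0 < ε' := lt_min hε₀ hδ
    obtain ⟨U, hUopen, hUne, hU⟩ : ∃ U : Set H, IsOpen U ∧ U.Nonempty ∧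
        ∀ η ∈ U, dist η 1 < ε' ∧ ((j:ℕ) < k → sstar * η ∈ A) ∧
          (0 < (j:ℕ) → tmax * η ∉ A) := by
      rcases Nat.eq_zero_or_pos (j:ℕ) with hj0 | hj0
      · have hjk : (j:ℕ) < k := by omega
        have hsA : sstar ∈ A := hfr_subA (hS_fr _ (hsstar hjk)).1
        have hscl : sstar ∈ closure (interior A) := by rw [← hA_reg]; exact hsA
        obtain ⟨w, hw, hdw⟩ := Metric.mem_closure_iff.mp hscl ε' hε'
        refine ⟨{η : H | sstar * η ∈ interior A} ∩ Metric.ball 1 ε',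
          IsOpen.inter (isOpen_interior.preimage (continuous_mul_left _)) Metric.isOpen_ball,
          ⟨sstar⁻¹ * w, ?_, ?_⟩, ?_⟩
        · show sstar * (sstar⁻¹ * w) ∈ interior A
          rwa [mul_inv_cancel_left]
        · rw [Metric.mem_ball]
          have h3 : dist (sstar⁻¹ * w) (sstar⁻¹ * sstar) = dist w sstar := dL _ _ _
          rw [inv_mul_cancel] at h3
          rw [h3]
          rwa [dist_comm] at hdw
        · rintro η ⟨h1, h2⟩
          exact ⟨Metric.mem_ball.mp h2, fun _ => hint_subA h1,
            fun h0 => absurd h0 (by omega)⟩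
      · rcases Nat.lt_or_ge (j:ℕ) k with hjk | hjk
        · have hj1k : (j:ℕ) - 1 < k := by omega
          have hltf : (⟨(j:ℕ)-1, hj1k⟩ : Fin k) < ⟨(j:ℕ), hjk⟩ := by
            rw [Fin.lt_def]; show (j:ℕ) - 1 < (j:ℕ); omega
          have hno : ¬ precEq W ξ sstar tmax :=
            (hS_order _ _ hltf tmax (htmax hj0) sstar (hsstar hjk)).2
          rw [hprec] at hno
          push_neg at hno
          obtain ⟨η₁, hdη₁, hsη₁, htη₁⟩ := hno (ε'/2) (by positivity)
          obtain ⟨r, hr, hball⟩ := Metric.isOpen_iff.mp hA_closed.isOpen_compl (tmax * η₁) htη₁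
          have hscl : sstar * η₁ ∈ closure (interior A) := by rw [← hA_reg]; exact hsη₁
          obtain ⟨w, hw, hdw⟩ := Metric.mem_closure_iff.mp hscl (min r (ε'/2))
            (lt_min hr (by positivity))
          set η₀ := sstar⁻¹ * w with hη₀
          have hsw : sstar * η₀ = w := by rw [hη₀, mul_inv_cancel_left]
          have hdist01 : dist η₀ η₁ = dist (sstar * η₁) w := by
            have h4 := dL sstar η₀ η₁
            rw [hsw] at h4
            rw [← h4, dist_comm]
          refine ⟨{η : H | sstar * η ∈ interior A} ∩ {η : H | tmax * η ∈ Aᶜ}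
              ∩ Metric.ball 1 ε', ?_, ⟨η₀, ⟨⟨?_, ?_⟩, ?_⟩⟩, ?_⟩
          · exact IsOpen.inter (IsOpen.inter
              (isOpen_interior.preimage (continuous_mul_left _))
              (hA_closed.isOpen_compl.preimage (continuous_mul_left _))) Metric.isOpen_ball
          · show sstar * η₀ ∈ interior A
            rw [hsw]; exact hw
          · show tmax * η₀ ∈ Aᶜ
            apply hball
            rw [Metric.mem_ball]
            have h5 : dist (tmax * η₀) (tmax * η₁) = dist η₀ η₁ := dL _ _ _
            rw [h5, hdist01]
            exact lt_of_lt_of_le hdw (min_le_left _ _)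
          · rw [Metric.mem_ball]
            calc dist η₀ 1 ≤ dist η₀ η₁ + dist η₁ 1 := dist_triangle _ _ _
              _ < ε'/2 + ε'/2 := by
                  apply add_lt_add
                  · rw [hdist01]; exact lt_of_lt_of_le hdw (min_le_right _ _)
                  · exact hdη₁
              _ = ε' := by ring
          · rintro η ⟨⟨h1, h2⟩, h3⟩
            exact ⟨Metric.mem_ball.mp h3, fun _ => hint_subA h1, fun _ => h2⟩
        · have hj1k : (j:ℕ) - 1 < k := by omega
          have htA : tmax ∈ frontier A := (hS_fr _ (htmax hj0)).1
          have htcl : tmax ∈ closure Aᶜ := by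
            rw [frontier_eq_closure_inter_closure] at htA
            exact htA.2
          obtain ⟨w, hw, hdw⟩ := Metric.mem_closure_iff.mp htcl ε' hε'
          refine ⟨{η : H | tmax * η ∈ Aᶜ} ∩ Metric.ball 1 ε',
            IsOpen.inter (hA_closed.isOpen_compl.preimage (continuous_mul_left _))
              Metric.isOpen_ball, ⟨tmax⁻¹ * w, ?_, ?_⟩, ?_⟩
          · show tmax * (tmax⁻¹ * w) ∈ Aᶜ
            rwa [mul_inv_cancel_left]
          · rw [Metric.mem_ball]
            have h3 : dist (tmax⁻¹ * w) (tmax⁻¹ * tmax) = dist w tmax := dL _ _ _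
            rw [inv_mul_cancel] at h3
            rw [h3]
            rwa [dist_comm] at hdw
          · rintro η ⟨h1, h2⟩
            exact ⟨Metric.mem_ball.mp h2, fun hcon => absurd hjk (by omega), fun _ => h1⟩
    obtain ⟨η₀, hη₀U⟩ := hUne
    have hVopen : IsOpen ((fun w : H => w * ξ⁻¹) ⁻¹' U) :=
      hUopen.preimage (continuous_mul_right _)
    have hVne : ((fun w : H => w * ξ⁻¹) ⁻¹' U).Nonempty := ⟨η₀ * ξ, by simpa using hη₀U⟩
    obtain ⟨g, hgU⟩ := hτ_dense.exists_mem_open hVopen hVne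
    obtain ⟨hgd, hgs, hgt⟩ := hU (τ g * ξ⁻¹) hgU
    refine ⟨g, ?_, ?_⟩
    · have h6 : dist (τ g * ξ⁻¹ * ξ) (1 * ξ) = dist (τ g * ξ⁻¹) 1 := dR _ _ _
      rw [inv_mul_cancel_right, one_mul] at h6
      rw [h6]
      exact lt_of_lt_of_le hgd (min_le_right _ _)
    · intro h hh
      have hPh := hP h hh (τ g * ξ⁻¹) (lt_of_lt_of_le hgd (min_le_left _ _))
      rw [Bool.eq_iff_iff, hshift g h, hxval j h]
      obtain ⟨hP1, hP2, hP3, hP4⟩ := hPh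
      constructor
      · intro hmemA
        by_cases hint : τ h ∈ interior A
        · exact Or.inl hint
        by_cases hA' : τ h ∈ A
        · have hfr : τ h ∈ frontier A := by rw [hA_closed.frontier_eq]; exact ⟨hA', hint⟩
          obtain ⟨i₀, hi₀⟩ := hmemS (τ h) hfr ⟨h, rfl⟩
          rcases Nat.lt_or_ge (i₀:ℕ) (j:ℕ) with hlt2 | hge2
          · exact absurd (hP4 i₀ hi₀ hlt2 hmemA) (hgt (by omega))
          · exact Or.inr ⟨i₀, hge2, hi₀⟩
        · exact absurd hmemA (hP2 hA')
      · rintro (hint | ⟨i, hji, hSi⟩)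
        · exact hP1 hint
        · have hjk : (j:ℕ) < k := lt_of_le_of_lt hji i.2
          exact hP3 i hSi hji (hgs hjk)
  -- each x j is in the fiber
  have hxY : ∀ j : Fin (k+1), x j ∈ Y ∧ β (x j) = ξ := by
    intro j
    obtain ⟨u, hu⟩ := exists_surjective_nat G
    have hchoice : ∀ n : ℕ, ∃ g : G, dist (τ g) ξ < 1/((n:ℝ)+1) ∧
        ∀ h ∈ (Finset.range (n+1)).image u, shift g m h = x j h := by
      intro n
      exact key j (1/((n:ℝ)+1)) (by positivity) _
    choose g hg1 hg2 using hchoice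
    have htend : Tendsto (fun n => shift (g n) m) atTop (nhds (x j)) := by
      rw [tendsto_pi_nhds]
      intro h
      rw [my_tendsto_discrete]
      obtain ⟨nh, hnh⟩ := hu h
      filter_upwards [eventually_ge_atTop nh] with n hn
      exact hg2 n h (Finset.mem_image.mpr ⟨nh, Finset.mem_range.mpr (by omega), hnh⟩)
    have hXJ : x j ∈ Y := mem_closure_of_tendsto htend
      (Eventually.of_forall fun n => ⟨g n, rfl⟩)
    refine ⟨hXJ, ?_⟩
    have htendY : Tendsto (fun n => shift (g n) m) atTop (nhdsWithin (x j) Y) :=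
      tendsto_nhdsWithin_of_tendsto_nhds_of_eventually_within _ htend
        (Eventually.of_forall fun n => subset_closure ⟨g n, rfl⟩)
    have hβtend : Tendsto (fun n => β (shift (g n) m)) atTop (nhds (β (x j))) :=
      Filter.Tendsto.comp (hβ_cont (x j) hXJ) htendY
    have hβeq : (fun n => β (shift (g n) m)) = fun n => τ (g n) :=
      funext fun n => hβ_shift (g n)
    rw [hβeq] at hβtend
    have hτtend : Tendsto (fun n => τ (g n)) atTop (nhds ξ) := by
      rw [Metric.tendsto_atTop]
      intro ε hε
      obtain ⟨N, hN⟩ := exists_nat_one_div_lt hε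
      refine ⟨N, fun n hn => ?_⟩
      calc dist (τ (g n)) ξ < 1/((n:ℝ)+1) := hg1 n
        _ ≤ 1/((N:ℝ)+1) := by
            apply one_div_le_one_div_of_le
            · positivity
            · exact_mod_cast Nat.succ_le_succ hn
        _ < ε := hN
    exact tendsto_nhds_unique hβtend hτtend
  -- fiber is contained in the x j's
  have hfiber : ∀ y, y ∈ Y → β y = ξ → ∃ j : Fin (k+1), y = x j := by
    intro y hyY hyβ
    obtain ⟨z, hz_mem, hz_tend⟩ := mem_closure_iff_seq_limit.mp hyY
    choose g hgz using hz_mem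
    have hz_tendY : Tendsto z atTop (nhdsWithin y Y) :=
      tendsto_nhdsWithin_of_tendsto_nhds_of_eventually_within _ hz_tend
        (Eventually.of_forall fun n => subset_closure ⟨g n, hgz n⟩)
    have hβz : Tendsto (fun n => τ (g n)) atTop (nhds ξ) := by
      have hco : Tendsto (β ∘ z) atTop (nhds (β y)) :=
        Filter.Tendsto.comp (hβ_cont y hyY) hz_tendY
      rw [hyβ] at hco
      have heq : (fun n => τ (g n)) = β ∘ z :=
        funext fun n => by
          rw [Function.comp_apply, ← hgz n, hβ_shift]
      rw [heq]
      exact hco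
    have hηtend : Tendsto (fun n => τ (g n) * ξ⁻¹) atTop (nhds 1) := by
      have hc : Tendsto (fun w : H => w * ξ⁻¹) (nhds ξ) (nhds (ξ * ξ⁻¹)) :=
        (continuous_mul_right ξ⁻¹).tendsto ξ
      rw [mul_inv_cancel] at hc
      exact hc.comp hβz
    have hev : ∀ h : G, ∀ᶠ n in atTop, ((τ h * (τ (g n) * ξ⁻¹) ∈ A) ↔ y h = true) := by
      intro h
      have h1 : Tendsto (fun n => z n h) atTop (nhds (y h)) := (tendsto_pi_nhds.mp hz_tend) h
      rw [my_tendsto_discrete] at h1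
      filter_upwards [h1] with n hn
      rw [← hn, ← hgz n]
      exact (hshift _ _).symm
    have hsmall : ∀ ε : ℝ, 0 < ε → ∀ᶠ n in atTop, dist (τ (g n) * ξ⁻¹) 1 < ε := by
      intro ε hε
      exact Metric.tendsto_nhds.mp hηtend ε hε
    set acc : Fin k → Prop := fun i => ∃ h : G, τ h ∈ S i ∧ y h = true with hacc_def
    have hprop : ∀ (i i' : Fin k), i ≤ i' → acc i → ∀ h' : G, τ h' ∈ S i' → y h' = true := by
      rintro i i' hii ⟨h, hhS, hhy⟩ h' hh'S
      obtain ⟨ε, hε, himp⟩ := (hprec _ _).mp (hle i i' hii _ hhS _ hh'S)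
      have hA1 : ∀ᶠ n in atTop, τ h * (τ (g n) * ξ⁻¹) ∈ A := by
        filter_upwards [hev h] with n hn
        exact hn.mpr hhy
      have hA2 : ∀ᶠ n in atTop, τ h' * (τ (g n) * ξ⁻¹) ∈ A := by
        filter_upwards [hA1, hsmall ε hε] with n h1 h2
        exact himp _ h2 h1
      obtain ⟨n, hn1, hn2⟩ := (hA2.and (hev h')).exists
      exact hn2.mp hn1
    have hint_val : ∀ h : G, τ h ∈ interior A → y h = true := by
      intro h hint
      have hmem : {η : H | τ h * η ∈ interior A} ∈ nhds (1:H) :=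
        (isOpen_interior.preimage (continuous_mul_left _)).mem_nhds (by simpa using hint)
      have hevA : ∀ᶠ n in atTop, τ h * (τ (g n) * ξ⁻¹) ∈ A := by
        filter_upwards [hηtend hmem] with n hn
        exact hint_subA hn
      obtain ⟨n, hn1, hn2⟩ := (hevA.and (hev h)).exists
      exact hn2.mp hn1
    have hext_val : ∀ h : G, τ h ∉ A → y h = false := by
      intro h hext
      have hmem : {η : H | τ h * η ∈ Aᶜ} ∈ nhds (1:H) :=
        (hA_closed.isOpen_compl.preimage (continuous_mul_left _)).mem_nhds (by simpa using hext)
      have hevA : ∀ᶠ n in atTop, τ h * (τ (g n) * ξ⁻¹) ∉ A := by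
        filter_upwards [hηtend hmem] with n hn
        exact hn
      obtain ⟨n, hn1, hn2⟩ := (hevA.and (hev h)).exists
      rcases Bool.eq_false_or_eq_true (y h) with h1 | h0
      · exact absurd (hn2.mpr h1) hn1
      · exact h0
    have hex : ∃ n : ℕ, n = k ∨ ∃ hn : n < k, acc ⟨n, hn⟩ := ⟨k, Or.inl rfl⟩
    set jn := Nat.find hex with hjn_def
    have hjn_le : jn ≤ k := Nat.find_min' hex (Or.inl rfl)
    have hacc_iff : ∀ i : Fin k, acc i ↔ jn ≤ (i:ℕ) := by
      intro i
      constructor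
      · intro hi
        exact Nat.find_min' hex (Or.inr ⟨i.2, by simpa using hi⟩)
      · intro hji
        rcases Nat.find_spec hex with hk' | ⟨hn, haccjn⟩
        · rw [← hjn_def] at hk'
          have hik := i.2
          omega
        · have hji' : (⟨jn, hn⟩ : Fin k) ≤ i := by rw [Fin.le_def]; exact hji
          obtain ⟨t, htS⟩ := hS_ne i
          obtain ⟨h', hh'⟩ := (hS_fr i htS).2
          refine ⟨h', by rw [hh']; exact htS, ?_⟩
          exact hprop _ i hji' haccjn h' (by rw [hh']; exact htS)
    refine ⟨⟨jn, by omega⟩, ?_⟩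
    funext h
    rw [Bool.eq_iff_iff, hxval]
    simp only []
    by_cases hint : τ h ∈ interior A
    · constructor
      · intro _; exact Or.inl hint
      · intro _; exact hint_val h hint
    · by_cases hA' : τ h ∈ A
      · have hfr : τ h ∈ frontier A := by rw [hA_closed.frontier_eq]; exact ⟨hA', hint⟩
        obtain ⟨i₀, hi₀⟩ := hmemS (τ h) hfr ⟨h, rfl⟩
        have hyiff : y h = true ↔ jn ≤ (i₀:ℕ) := by
          constructor
          · intro hy
            exact (hacc_iff i₀).mp ⟨h, hi₀, hy⟩
          · intro hji
            exact hprop i₀ i₀ le_rfl ((hacc_iff i₀).mpr hji) h hi₀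
        rw [hyiff]
        constructor
        · intro hji
          exact Or.inr ⟨i₀, hji, hi₀⟩
        · rintro (hc | ⟨i, hji, hSi⟩)
          · exact absurd hc hint
          · rw [huniq _ i i₀ hSi hi₀] at hji
            exact hji
      · rw [hext_val h hA']
        constructor
        · intro hcon
          exact absurd hcon (by simp)
        · rintro (hc | ⟨i, _, hSi⟩)
          · exact absurd (hint_subA hc) hA'
          · exact absurd (hfr_subA (hS_fr i hSi).1) hA'
  -- assembly
  have hrange : {y ∈ Y | β y = ξ} = Set.range x := by
    ext y
    constructor
    · rintro ⟨hyY, hyβ⟩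
      obtain ⟨j, hj⟩ := hfiber y hyY hyβ
      exact ⟨j, hj.symm⟩
    · rintro ⟨j, rfl⟩
      exact ⟨(hxY j).1, (hxY j).2⟩
  have hinj : Function.Injective x := by
    have hxne : ∀ (j j' : Fin (k+1)), (j:ℕ) < (j':ℕ) → x j ≠ x j' := by
      intro j j' hlt hEq
      have hj'k : (j':ℕ) ≤ k := Nat.lt_succ_iff.mp j'.2
      have hjk : (j:ℕ) < k := by omega
      obtain ⟨s, hs⟩ := hS_ne ⟨j, hjk⟩
      obtain ⟨h, hh⟩ := (hS_fr _ hs).2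
      have h1 : x j h = true := (hxval j h).mpr (Or.inr ⟨⟨j, hjk⟩, le_rfl, by rw [hh]; exact hs⟩)
      have h2 : x j' h ≠ true := by
        intro hcon
        rw [hxval j' h] at hcon
        rcases hcon with hc | ⟨i, hji, hSi⟩
        · rw [hh] at hc
          exact hfr_int s (hS_fr _ hs).1 hc
        · rw [hh] at hSi
          have hii := huniq s i ⟨j, hjk⟩ hSi hs
          rw [hii] at hji
          simp at hji
          omega
      rw [hEq] at h1
      exact h2 h1
    intro j j' hEq
    by_contra hne
    rcases Nat.lt_or_ge (j:ℕ) (j':ℕ) with h | h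
    · exact hxne j j' h hEq
    · rcases Nat.lt_or_ge (j':ℕ) (j:ℕ) with h' | h'
      · exact hxne j' j h' hEq.symm
      · exact hne (Fin.ext (by omega))
  refine ⟨hrange, hinj, ?_⟩
  rw [hrange, ← Nat.card_coe_set_eq, Nat.card_range_of_injective hinj,
    Nat.card_eq_fintype_card, Fintype.card_fin]
end

section
/- Let Σ be a finite set with at least two elements and let x ∈ Σ^G be non-periodic, i.e. g·x = x implies g = 1_G. Then x is a Toeplitz array if and only if x is a regularly recurrent point of the full shift (Σ^G, G), i.e. for every open set U ⊆ Σ^G containing x there exists a finite-index subgroup Γ ≤ G such that γ·x ∈ U for all γ ∈ Γ. -/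
/-!
A basic neighbourhood of `x` in the product topology constrains only finitely many coordinates,
and the intersection of the finitely many finite-index subgroups fixing `x` at those coordinates
still has finite index. Conversely, `S` being discrete, each cylinder `{y | y g = x g}` is open.
-/

open Topology Set

section

variable {G S : Type*} [Group G]

def IsToeplitz (x : G → S) : Prop :=
  ∀ g : G, ∃ Γ : Subgroup G, Γ.FiniteIndex ∧ ∀ γ ∈ Γ, x (g * γ) = x g

def IsRegularlyRecurrent [TopologicalSpace S] (x : G → S) : Prop :=
  ∀ U : Set (G → S), IsOpen U → x ∈ U →
    ∃ Γ : Subgroup G, Γ.FiniteIndex ∧ ∀ γ ∈ Γ, shift γ x ∈ U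

theorem IsToeplitz.exists_finiteIndex_forall_shift_eq {x : G → S} (hx : IsToeplitz x)
    (I : Finset G) :
    ∃ Γ : Subgroup G, Γ.FiniteIndex ∧ ∀ γ ∈ Γ, ∀ g ∈ I, shift γ x g = x g := by
  choose Γ hΓ hfix using hx
  refine ⟨⨅ g ∈ I, Γ g, Subgroup.finiteIndex_iInf' Γ fun g _ => hΓ g, fun γ hγ g hg => ?_⟩
  exact hfix g γ (Subgroup.mem_iInf.mp (Subgroup.mem_iInf.mp hγ g) hg)

theorem IsToeplitz.isRegularlyRecurrent [TopologicalSpace S] {x : G → S} (hx : IsToeplitz x) :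
    IsRegularlyRecurrent x := by
  intro U hU hxU
  obtain ⟨I, u, hu, hIU⟩ := isOpen_pi_iff.mp hU x hxU
  obtain ⟨Γ, hΓ, hfix⟩ := hx.exists_finiteIndex_forall_shift_eq I
  refine ⟨Γ, hΓ, fun γ hγ => hIU fun g hg => ?_⟩
  rw [hfix γ hγ g hg]
  exact (hu g hg).2

theorem IsRegularlyRecurrent.isToeplitz [TopologicalSpace S] [DiscreteTopology S] {x : G → S}
    (hx : IsRegularlyRecurrent x) : IsToeplitz x := fun g =>
  hx _ ((isOpen_discrete {x g}).preimage (continuous_apply (A := fun _ : G => S) g)) rfl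

end

theorem statement15_general
    {G : Type*} [Group G]
    {S : Type*} [TopologicalSpace S] [DiscreteTopology S]
    (x : G → S) :
    (∀ g : G, ∃ Γ : Subgroup G, Γ.FiniteIndex ∧ ∀ γ ∈ Γ, x (g * γ) = x g) ↔
    (∀ U : Set (G → S), IsOpen U → x ∈ U →
      ∃ Γ : Subgroup G, Γ.FiniteIndex ∧ ∀ γ ∈ Γ, shift γ x ∈ U) :=
  ⟨IsToeplitz.isRegularlyRecurrent, IsRegularlyRecurrent.isToeplitz⟩

/-- For a finite alphabet `S` with at least two elements and a
non-periodic `x ∈ S^G`, `x` is a Toeplitz array if and only if `x` is a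
regularly recurrent point of the full shift `(S^G, G)`. -/
theorem statement15
    {G : Type*} [Group G] [Countable G]
    {S : Type*} [Fintype S] [TopologicalSpace S] [DiscreteTopology S]
    (hcard : 2 ≤ Fintype.card S)
    (x : G → S)
    (h_nonperiodic : ∀ g : G, shift g x = x → g = 1) :
    (∀ g : G, ∃ Γ : Subgroup G, Γ.FiniteIndex ∧ ∀ γ ∈ Γ, x (g * γ) = x g) ↔
    (∀ U : Set (G → S), IsOpen U → x ∈ U →
      ∃ Γ : Subgroup G, Γ.FiniteIndex ∧ ∀ γ ∈ Γ, shift γ x ∈ U) :=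
  statement15_general x
end

section
/- Let H be a compact topological group and (K_n)_{n≥0} a decreasing sequence of open normal subgroups of H with K_0 = H and ⋂_{n≥0} K_n = {1_H}. Let W ⊆ H and suppose that for every n ≥ 0 there exists a coset S of K_n in H such that S ∩ W ≠ ∅, S \ W ≠ ∅, and there is exactly one coset S' of K_{n+1} in H with S' ⊆ S and S' ∩ W = ∅. Then W is irredundant: for every ξ ∈ H, W·ξ = W implies ξ = 1_H. -/
open Topology Set

/-- Let `H` be a compact topological group and `(K_n)` a
decreasing sequence of open normal subgroups with `K 0 = ⊤` and trivial
intersection. If for every `n` there is a coset `S` of `K n` meeting both `W`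
and its complement and containing exactly one coset of `K (n+1)` disjoint from
`W`, then `W` is irredundant. -/
theorem statement16
    {H : Type*} [Group H] [TopologicalSpace H] [IsTopologicalGroup H] [CompactSpace H]
    (K : ℕ → Subgroup H)
    (hK0 : K 0 = ⊤)
    (hK_mono : ∀ n, K (n + 1) ≤ K n)
    (hK_open : ∀ n, IsOpen (K n : Set H))
    (hK_norm : ∀ n, (K n).Normal)
    (hK_sep : ∀ h : H, (∀ n, h ∈ K n) → h = 1)
    (W : Set H)
    (hyp : ∀ n : ℕ, ∃ h : H,
      ((fun k => h * k) '' (K n : Set H) ∩ W).Nonempty ∧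
      ((fun k => h * k) '' (K n : Set H) \ W).Nonempty ∧
      ∃! S' : Set H,
        (∃ h' : H, S' = (fun k => h' * k) '' (K (n + 1) : Set H)) ∧
        S' ⊆ (fun k => h * k) '' (K n : Set H) ∧ S' ∩ W = ∅) :
    ∀ ξ : H, (fun w => w * ξ) '' W = W → ξ = 1 := by
  classical
  intro ξ hW
  by_contra hξ
  have hex : ∃ n, ξ ∉ K n := by
    by_contra h
    push_neg at h
    exact hξ (hK_sep ξ h)
  obtain ⟨m, hfind⟩ : ∃ m, Nat.find hex = m + 1 := by
    cases hN : Nat.find hex with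
    | zero =>
      exfalso
      have hspec := Nat.find_spec hex
      rw [hN, hK0] at hspec
      exact hspec trivial
    | succ m => exact ⟨m, rfl⟩
  have hξm : ξ ∈ K m := by
    by_contra h
    exact Nat.find_min hex (by omega) h
  have hξm1 : ξ ∉ K (m + 1) := hfind ▸ Nat.find_spec hex
  obtain ⟨h, hW1, hW2, S', ⟨⟨h', hS'⟩, hsub, hdis⟩, huniq⟩ := hyp m
  set T : Set H := (fun w => w * ξ) '' S' with hT
  have hTcoset : ∃ h'' : H, T = (fun k => h'' * k) '' (K (m + 1) : Set H) := by
    refine ⟨h' * ξ, ?_⟩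
    ext x
    constructor
    · rintro ⟨y, hy, rfl⟩
      rw [hS'] at hy
      obtain ⟨k, hk, rfl⟩ := hy
      refine ⟨ξ⁻¹ * k * ξ, ?_, by group⟩
      have := (hK_norm (m + 1)).conj_mem k hk ξ⁻¹
      simpa using this
    · rintro ⟨k, hk, rfl⟩
      refine ⟨h' * (ξ * k * ξ⁻¹), ?_, by group⟩
      rw [hS']
      exact ⟨ξ * k * ξ⁻¹, (hK_norm (m + 1)).conj_mem k hk ξ, rfl⟩
  have hTsub : T ⊆ (fun k => h * k) '' (K m : Set H) := by
    rintro x ⟨y, hy, rfl⟩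
    obtain ⟨k, hk, rfl⟩ := hsub hy
    exact ⟨k * ξ, mul_mem hk hξm, (mul_assoc _ _ _).symm⟩
  have hTdis : T ∩ W = ∅ := by
    rw [Set.eq_empty_iff_forall_notMem]
    rintro x ⟨⟨y, hy, rfl⟩, hxW⟩
    rw [← hW] at hxW
    obtain ⟨w, hw, hwx⟩ := hxW
    have : w = y := mul_right_cancel hwx
    subst this
    have : w ∈ S' ∩ W := ⟨hy, hw⟩
    rw [hdis] at this
    exact this
  have hTS : T = S' := huniq T ⟨hTcoset, hTsub, hTdis⟩
  have hh' : h' ∈ S' := by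
    rw [hS']
    exact ⟨1, (K (m + 1)).one_mem, by simp⟩
  have : h' * ξ ∈ S' := hTS ▸ ⟨h', hh', rfl⟩
  rw [hS'] at this
  obtain ⟨k, hk, hkeq⟩ := this
  have : ξ = k := mul_left_cancel hkeq.symm
  exact hξm1 (this ▸ hk)
end
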